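/- arXiv:2410.17125 — 6 statements merged into one kernel-verified Lean document; each statement's English description precedes it below -/
import Mathlib

section
/- Let 𝔤 be a finite-dimensional semisimple Lie algebra over ℂ with Cartan subalgebra 𝔥, let α be a root of (𝔤,𝔥) with coroot h_α ∈ 𝔥, and let V be a finite-dimensional 𝔤-module. Let W ⊆ V be an 𝔥-invariant linear subspace such that x·w ∈ W for every x in the root space 𝔤_α and every w ∈ W. Then Σ_β dim_ℂ(W ∩ V_β)·β(h_α) ≥ 0, where β runs over the 𝔥-weights of V; equivalently, the trace of the action of h_α on W is a nonnegative integer. (Since β(h_α) = 2(β,α)/(α,α) for the Killing-induced form (·,·) on 𝔥*, this is the paper's statement Σ_{β∈Δ(W,𝔥)}(β,α) ≥ 0, where Δ(W,𝔥) is the multiset of nonzero 𝔥-weights of W counted with multiplicity.) -/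
/-!
Choose an sl₂-triple `(h, e, f)` with `e ∈ 𝔤_α`; then `h = h_α`. The eigenvalues of `h` on `V` are
integers, and for `k ≥ 0` the power `e^k` is injective on the generalized `h`-eigenspace `V_{-k}`.
Indeed, a nonzero `v ∈ V_{-k}` with `e^k v = 0` may be taken to be an eigenvector of the Casimir
`C = 4fe + h² + 2h`; then `e^i v` (for some `i < k`) is primitive of weight `-k + 2i`, and `f^j v`
(for some `j`) is primitive of weight `k + 2j` for the triple `(-h, f, e)`, which has the same
Casimir. On a primitive vector of weight `μ` the Casimir acts by `μ(μ + 2)`, so `-k + 2i = k + 2j`,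
which is impossible. As `W` is stable under `h` and `e`, `e^k` embeds `W ∩ V_{-k}` into `W ∩ V_k`,
so in `tr(h|W) = Σ_μ μ · dim(W ∩ V_μ)` each negative weight is outweighed by its opposite.
-/

open LieAlgebra LieModule LieAlgebra.IsKilling
open Module Set

namespace Multiset

variable {α : Type*} [AddCommGroup α] [LinearOrder α] [IsOrderedAddMonoid α] [DecidableEq α]

theorem sum_nonneg_of_count_neg_le {s : Multiset α}
    (hs : ∀ a, 0 < a → s.count (-a) ≤ s.count a) : 0 ≤ s.sum := by
  set sNeg := s.filter (· < 0)
  set sNonneg := s.filter (fun a => ¬ a < 0)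
  have hle : sNeg.map Neg.neg ≤ sNonneg := by
    refine le_iff_count.mpr fun a => ?_
    rw [← neg_neg a, count_map_eq_count' _ _ neg_injective, neg_neg]
    rcases lt_or_ge 0 a with ha | ha
    · rw [count_filter_of_pos (p := (· < 0)) (neg_neg_iff_pos.mpr ha),
        count_filter_of_pos (p := fun a => ¬ a < 0) (not_lt.mpr ha.le)]
      exact hs a ha
    · rw [count_filter_of_neg (p := (· < 0)) (by simpa using ha)]
      exact Nat.zero_le _
  obtain ⟨r, hr⟩ := le_iff_exists_add.mp hle
  have hr_nonneg : ∀ a ∈ r, 0 ≤ a := fun a ha => by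
    have : a ∈ sNonneg := hr ▸ mem_add.mpr (Or.inr ha)
    simpa using (mem_filter.mp this).2
  calc (0 : α) ≤ r.sum := sum_nonneg hr_nonneg
    _ = sNeg.sum + sNonneg.sum := by rw [hr, sum_add, sum_map_neg']; abel
    _ = s.sum := by rw [← sum_add, filter_add_not]

end Multiset

namespace Module.End

variable {K V : Type*} [Field K] [AddCommGroup V] [Module K V]
  {f : End K V} {p : Submodule K V}

theorem exists_hasEigenvector_of_mapsTo [IsAlgClosed K] [FiniteDimensional K V] (hp : p ≠ ⊥)
    (hfp : ∀ x ∈ p, f x ∈ p) :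
    ∃ μ, ∃ v ∈ p, f.HasEigenvector μ v := by
  have : Nontrivial p := Submodule.nontrivial_iff_ne_bot.mpr hp
  obtain ⟨μ, hμ⟩ := exists_eigenvalue (f.restrict hfp)
  obtain ⟨v, hv⟩ := hμ.exists_hasEigenvector
  refine ⟨μ, v, v.2, mem_eigenspace_iff.mpr (congrArg Subtype.val hv.apply_eq_smul), ?_⟩
  simpa using hv.2

theorem exists_hasEigenvector_of_le_maxGenEigenspace [IsAlgClosed K] [FiniteDimensional K V]
    {μ : K} (hp : p ≠ ⊥) (hfp : ∀ x ∈ p, f x ∈ p) (hpμ : p ≤ f.maxGenEigenspace μ) :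
    ∃ v ∈ p, f.HasEigenvector μ v := by
  obtain ⟨ν, v, hvp, hv⟩ := exists_hasEigenvector_of_mapsTo hp hfp
  obtain rfl : ν = μ := by
    by_contra hne
    exact hv.2 (Submodule.disjoint_def.mp (f.disjoint_genEigenspace hne 1 ⊤) v hv.1 (hpμ hvp))
  exact ⟨v, hvp, hv⟩

theorem finrank_maxGenEigenspace_restrict (hfp : ∀ x ∈ p, f x ∈ p) (μ : K) :
    finrank K (maxGenEigenspace (f.restrict hfp) μ) = finrank K ↥(p ⊓ f.maxGenEigenspace μ) := by
  rw [Submodule.inf_genEigenspace f p hfp, Submodule.finrank_map_subtype_eq]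

end Module.End

theorem Nat.eq_of_cast_mul_add_two_eq (K : Type*) [Semiring K] [CharZero K] {a b : ℕ}
    (h : (a : K) * (a + 2) = b * (b + 2)) : a = b := by
  have h' : a * (a + 2) = b * (b + 2) := by exact_mod_cast h
  nlinarith

section Sl2

variable {K L M : Type*} [Field K] [LieRing L] [LieAlgebra K L]
  [AddCommGroup M] [Module K M] [LieRingModule L M] [LieModule K L M] {h e f : L}

local notation "φ" => toEnd K L M

variable (K M) in
def sl2Casimir (h e f : L) : End K M := (4 : K) • (φ f * φ e) + φ h * φ h + (2 : K) • φ h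

lemma sl2Casimir_apply (m : M) :
    sl2Casimir K M h e f m = (4 : K) • ⁅f, ⁅e, m⁆⁆ + ⁅h, ⁅h, m⁆⁆ + (2 : K) • ⁅h, m⁆ := by
  simp [sl2Casimir]

namespace IsSl2Triple

variable (t : IsSl2Triple h e f)
include t

variable (K) in
lemma lie_e_lie_h (m : M) : ⁅e, ⁅h, m⁆⁆ = ⁅h, ⁅e, m⁆⁆ - (2 : K) • ⁅e, m⁆ := by
  rw [leibniz_lie, ← lie_skew, t.lie_h_e_smul K, neg_lie, smul_lie]
  abel

lemma lie_e_lie_f (m : M) : ⁅e, ⁅f, m⁆⁆ = ⁅f, ⁅e, m⁆⁆ + ⁅h, m⁆ := by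
  rw [leibniz_lie, t.lie_e_f, add_comm]

lemma semiconjBy_toEnd_e (μ : K) :
    SemiconjBy (φ e) (φ h - μ • 1) (φ h - (μ + 2) • 1) := by
  refine LinearMap.ext fun m => ?_
  simp only [Module.End.mul_apply, LinearMap.sub_apply, LinearMap.smul_apply, Module.End.one_apply,
    toEnd_apply_apply, lie_sub, lie_smul, t.lie_e_lie_h K]
  module

lemma semiconjBy_pow_toEnd_e (μ : K) (k : ℕ) :
    SemiconjBy (φ e ^ k) (φ h - μ • 1) (φ h - (μ + 2 * k) • 1) := by
  induction k with
  | zero => simp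
  | succ k ih =>
    have := (t.semiconjBy_toEnd_e (μ + 2 * k)).mul_left ih
    rwa [← pow_succ', show μ + 2 * k + 2 = μ + 2 * (k + 1 : ℕ) by push_cast; ring] at this

lemma mapsTo_maxGenEigenspace_pow_toEnd_e (μ : K) (k : ℕ) :
    MapsTo (φ e ^ k) ((φ h).maxGenEigenspace μ) ((φ h).maxGenEigenspace (μ + 2 * k)) := by
  intro m hm
  obtain ⟨n, hn⟩ := (Module.End.mem_maxGenEigenspace _ _ _).mp hm
  refine (Module.End.mem_maxGenEigenspace _ _ _).mpr ⟨n, ?_⟩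
  rw [← Module.End.mul_apply, ← ((t.semiconjBy_pow_toEnd_e μ k).pow_right n).eq,
    Module.End.mul_apply, hn, map_zero]

lemma mapsTo_ker_pow_toEnd_e (k : ℕ) :
    MapsTo (φ h) (LinearMap.ker (φ e ^ k)) (LinearMap.ker (φ e ^ k)) := by
  intro m hm
  have := congrArg (· m) (t.semiconjBy_pow_toEnd_e (0 : K) k).eq
  simpa [LinearMap.mem_ker.mp hm] using this

lemma sl2Casimir_symm : sl2Casimir K M (-h) f e = sl2Casimir K M h e f := by
  refine LinearMap.ext fun m => ?_
  simp only [sl2Casimir_apply, neg_lie, lie_neg, t.lie_e_lie_f]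
  module

lemma commute_sl2Casimir_toEnd_e : Commute (sl2Casimir K M h e f) (φ e) := by
  refine LinearMap.ext fun m => ?_
  simp only [Module.End.mul_apply, sl2Casimir_apply, toEnd_apply_apply, lie_add, lie_smul,
    lie_sub, t.lie_e_lie_h K, t.lie_e_lie_f]
  module

lemma commute_sl2Casimir_toEnd_f : Commute (sl2Casimir K M h e f) (φ f) := by
  rw [← t.sl2Casimir_symm]
  exact t.symm.commute_sl2Casimir_toEnd_e

lemma commute_sl2Casimir_toEnd_h : Commute (sl2Casimir K M h e f) (φ h) := by
  have hef : φ h = φ e * φ f - φ f * φ e :=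
    LinearMap.ext fun m => by simp [t.lie_e_lie_f]
  have he := t.commute_sl2Casimir_toEnd_e (K := K) (M := M)
  have hf := t.commute_sl2Casimir_toEnd_f (K := K) (M := M)
  rw [hef]
  exact (he.mul_right hf).sub_right (hf.mul_right he)

omit t in
lemma HasPrimitiveVectorWith.sl2Casimir_apply {t : IsSl2Triple h e f} {m : M} {μ : K}
    (P : t.HasPrimitiveVectorWith m μ) : sl2Casimir K M h e f m = (μ * (μ + 2)) • m := by
  rw [_root_.sl2Casimir_apply, P.lie_e, P.lie_h, lie_zero, lie_smul, P.lie_h, smul_zero]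
  module

omit t in
lemma HasPrimitiveVectorWith.eq_of_sl2Casimir_apply {t : IsSl2Triple h e f} {m : M} {μ c : K}
    {i : ℕ} (P : t.HasPrimitiveVectorWith ((φ e ^ i) m) μ) (hm : sl2Casimir K M h e f m = c • m) :
    c = μ * (μ + 2) := by
  have hc : sl2Casimir K M h e f ((φ e ^ i) m) = c • (φ e ^ i) m := by
    rw [← Module.End.mul_apply, (t.commute_sl2Casimir_toEnd_e.pow_right i).eq,
      Module.End.mul_apply, hm, map_smul]
  exact smul_left_injective K P.ne_zero (hc.symm.trans P.sl2Casimir_apply)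

variable [CharZero K] [FiniteDimensional K M]

lemma exists_pow_toEnd_e_eq_zero {m : M} {μ : K} (hm : ⁅h, m⁆ = μ • m) :
    ∃ n, (φ e ^ n) m = 0 := by
  by_contra! hne
  have hind := (φ h).eigenvectors_linearIndependent' (fun n : ℕ => μ + 2 * n)
    (fun a b hab => by simpa using hab) (fun n => (φ e ^ n) m)
    (fun n => ⟨Module.End.mem_eigenspace_iff.mpr (t.lie_h_pow_toEnd_e hm n), hne n⟩)
  have := hind.finite
  exact _root_.not_finite ℕ

lemma exists_hasPrimitiveVectorWith_pow_toEnd_e {m : M} {μ : K} (hm₀ : m ≠ 0)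
    (hm : ⁅h, m⁆ = μ • m) : ∃ n : ℕ, t.HasPrimitiveVectorWith ((φ e ^ n) m) (μ + 2 * n) := by
  obtain ⟨n, hn, hn'⟩ :=
    Nat.exists_not_and_succ_of_not_zero_of_exists (by simpa) (t.exists_pow_toEnd_e_eq_zero hm)
  exact ⟨n, hn, t.lie_h_pow_toEnd_e hm n, by rwa [lie_e_pow_toEnd_e]⟩

lemma exists_int_eq_of_lie_h_eq_smul {m : M} {μ : K} (hm₀ : m ≠ 0) (hm : ⁅h, m⁆ = μ • m) :
    ∃ z : ℤ, μ = z := by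
  obtain ⟨n, P⟩ := t.exists_hasPrimitiveVectorWith_pow_toEnd_e hm₀ hm
  obtain ⟨k, hk⟩ := P.exists_nat
  exact ⟨k - 2 * n, by push_cast; linear_combination hk⟩

variable [IsAlgClosed K]

lemma disjoint_ker_pow_toEnd_e_eigenspace (k : ℕ) :
    Disjoint (LinearMap.ker (φ e ^ k)) ((φ h).eigenspace (-(k : K))) := by
  rw [disjoint_iff]
  set p := LinearMap.ker (φ e ^ k) ⊓ (φ h).eigenspace (-(k : K))
  by_contra hp
  have hCp : ∀ v ∈ p, sl2Casimir K M h e f v ∈ p := fun v hv =>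
    Submodule.mem_inf.mpr ⟨by rw [LinearMap.mem_ker, ← Module.End.mul_apply,
        ← (t.commute_sl2Casimir_toEnd_e.pow_right k).eq, Module.End.mul_apply,
        LinearMap.mem_ker.mp hv.1, map_zero],
      Module.End.mapsTo_genEigenspace_of_comm t.commute_sl2Casimir_toEnd_h.symm _ 1 hv.2⟩
  obtain ⟨c, v, ⟨hvk, hvh⟩, hv⟩ := Module.End.exists_hasEigenvector_of_mapsTo hp hCp
  have hhv : ⁅h, v⁆ = -(k : K) • v := Module.End.mem_eigenspace_iff.mp hvh
  obtain ⟨i, P⟩ := t.exists_hasPrimitiveVectorWith_pow_toEnd_e hv.2 hhv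
  obtain ⟨j, Q⟩ := t.symm.exists_hasPrimitiveVectorWith_pow_toEnd_e hv.2
    (show ⁅-h, v⁆ = (k : K) • v by rw [neg_lie, hhv, neg_smul, neg_neg])
  obtain ⟨n, hn⟩ := P.exists_nat
  have hik : i < k := by
    by_contra! hki
    refine P.ne_zero ?_
    rw [← Nat.sub_add_cancel hki, pow_add, Module.End.mul_apply, LinearMap.mem_ker.mp hvk,
      map_zero]
  have hcP := P.eq_of_sl2Casimir_apply hv.apply_eq_smul
  have hcQ := Q.eq_of_sl2Casimir_apply (by rw [t.sl2Casimir_symm]; exact hv.apply_eq_smul)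
  have hnj : n = k + 2 * j := Nat.eq_of_cast_mul_add_two_eq K <| by
    rw [← hn]
    push_cast
    linear_combination hcQ - hcP
  rw [hnj] at hn
  have hikj : (i : K) = k + j := by push_cast at hn; linear_combination hn / 2
  have : i = k + j := by exact_mod_cast hikj
  omega

lemma disjoint_ker_pow_toEnd_e_maxGenEigenspace (k : ℕ) :
    Disjoint (LinearMap.ker (φ e ^ k)) ((φ h).maxGenEigenspace (-(k : K))) := by
  rw [disjoint_iff]
  set p := LinearMap.ker (φ e ^ k) ⊓ (φ h).maxGenEigenspace (-(k : K))
  by_contra hp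
  have hhp : ∀ v ∈ p, φ h v ∈ p := fun v hv =>
    Submodule.mem_inf.mpr ⟨t.mapsTo_ker_pow_toEnd_e k hv.1,
      Module.End.mapsTo_maxGenEigenspace_of_comm rfl _ hv.2⟩
  obtain ⟨v, hvp, hv⟩ :=
    Module.End.exists_hasEigenvector_of_le_maxGenEigenspace hp hhp inf_le_right
  exact hv.2 (Submodule.disjoint_def.mp (t.disjoint_ker_pow_toEnd_e_eigenspace k) v
    (Submodule.mem_inf.mp hvp).1 hv.1)

lemma finrank_inf_maxGenEigenspace_neg_le {W : Submodule K M} (hWe : ∀ x ∈ W, φ e x ∈ W)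
    (k : ℕ) :
    finrank K ↥(W ⊓ (φ h).maxGenEigenspace (-(k : K))) ≤
      finrank K ↥(W ⊓ (φ h).maxGenEigenspace (k : K)) := by
  have hmaps : ∀ v ∈ W ⊓ (φ h).maxGenEigenspace (-(k : K)),
      (φ e ^ k) v ∈ W ⊓ (φ h).maxGenEigenspace (k : K) := fun v hv =>
    Submodule.mem_inf.mpr ⟨Module.End.pow_apply_mem_of_forall_mem k hWe v hv.1, by
      have := t.mapsTo_maxGenEigenspace_pow_toEnd_e (-(k : K)) k hv.2
      rwa [neg_add_eq_sub, two_mul, add_sub_cancel_right] at this⟩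
  refine LinearMap.finrank_le_finrank_of_injective (f := (φ e ^ k).restrict hmaps) ?_
  refine (injective_iff_map_eq_zero _).mpr fun v hv => Subtype.ext ?_
  exact Submodule.disjoint_def.mp (t.disjoint_ker_pow_toEnd_e_maxGenEigenspace k) (v : M)
    (congrArg Subtype.val hv) (Submodule.mem_inf.mp v.2).2

theorem exists_nat_trace_restrict_toEnd_h_eq {W : Submodule K M} (hWh : ∀ x ∈ W, φ h x ∈ W)
    (hWe : ∀ x ∈ W, φ e x ∈ W) : ∃ n : ℕ, LinearMap.trace K W ((φ h).restrict hWh) = n := by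
  classical
  set g := (φ h).restrict hWh
  have hcount (μ : K) : g.charpoly.roots.count μ = finrank K ↥(W ⊓ (φ h).maxGenEigenspace μ) := by
    rw [Polynomial.count_roots, ← LinearMap.finrank_maxGenEigenspace_eq,
      Module.End.finrank_maxGenEigenspace_restrict]
  have hint : ∀ μ ∈ g.charpoly.roots, μ ∈ range ((↑) : ℤ → K) := fun μ hμ => by
    obtain ⟨w, hw⟩ := ((Module.End.hasEigenvalue_iff_isRoot_charpoly g μ).mpr
      (Polynomial.isRoot_of_mem_roots hμ)).exists_hasEigenvector
    obtain ⟨z, rfl⟩ := t.exists_int_eq_of_lie_h_eq_smul (by simpa using hw.2)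
      (congrArg Subtype.val hw.apply_eq_smul)
    exact mem_range_self z
  have : CanLift K ℤ (↑) (· ∈ range ((↑) : ℤ → K)) := ⟨fun _ => id⟩
  lift g.charpoly.roots to Multiset ℤ using hint with s hs
  have hs_count (z : ℤ) : s.count z = finrank K ↥(W ⊓ (φ h).maxGenEigenspace (z : K)) := by
    rw [← hcount, Multiset.count_map_eq_count' _ _ Int.cast_injective]
  have hs_nonneg : 0 ≤ s.sum := Multiset.sum_nonneg_of_count_neg_le fun a ha => by
    lift a to ℕ using ha.le
    rw [hs_count, hs_count, Int.cast_neg, Int.cast_natCast]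
    exact t.finrank_inf_maxGenEigenspace_neg_le hWe a
  refine ⟨s.sum.toNat, ?_⟩
  rw [Module.End.trace_eq_sum_roots_charpoly_of_splits (IsAlgClosed.splits _), ← hs,
    ← Int.cast_multiset_sum]
  exact_mod_cast (Int.toNat_of_nonneg hs_nonneg).symm

end IsSl2Triple

end Sl2

/-- Let `𝔤` be a finite-dimensional semisimple complex Lie algebra (semisimplicity
being expressed by the nondegeneracy of the Killing form, `IsKilling`), `𝔥` a Cartan subalgebra,
`α` a root with coroot `coroot α`, and `V` a finite-dimensional `𝔤`-module.  If `W ⊆ V` is an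
`𝔥`-invariant subspace with `𝔤_α · W ⊆ W`, then the trace of the action of the coroot of `α`
on `W` (which equals `Σ_β dim(W ∩ V_β)·β(h_α)`) is a nonnegative integer. -/
theorem trace_coroot_nonneg
    {𝔤 : Type*} [LieRing 𝔤] [LieAlgebra ℂ 𝔤] [FiniteDimensional ℂ 𝔤]
    [LieAlgebra.IsKilling ℂ 𝔤]
    (𝔥 : LieSubalgebra ℂ 𝔤) [𝔥.IsCartanSubalgebra]
    (α : LieModule.Weight ℂ 𝔥 𝔤) (hα : α.IsNonZero)
    {V : Type*} [AddCommGroup V] [Module ℂ V] [LieRingModule 𝔤 V] [LieModule ℂ 𝔤 V]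
    [FiniteDimensional ℂ V]
    (W : Submodule ℂ V)
    (hW𝔥 : ∀ (H : 𝔥) (w : V), w ∈ W → (LieModule.toEnd ℂ 𝔤 V (H : 𝔤)) w ∈ W)
    (hWα : ∀ x ∈ rootSpace 𝔥 ⇑α, ∀ w ∈ W, ⁅x, w⁆ ∈ W) :
    ∃ n : ℕ,
      LinearMap.trace ℂ W
        ((LieModule.toEnd ℂ 𝔤 V ((coroot α : 𝔥) : 𝔤)).restrict
          (fun w hw => hW𝔥 (coroot α) w hw)) = (n : ℂ) := by
  obtain ⟨h, e, f, t, heα, hfα⟩ := exists_isSl2Triple_of_weight_isNonZero hα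
  obtain rfl := t.h_eq_coroot hα heα hfα
  exact t.exists_nat_trace_restrict_toEnd_h_eq _ fun w hw => hWα e heα w hw
end

section
/- Let 𝔤 be a finite-dimensional complex Lie algebra, 𝔤' ⊆ 𝔤 a semisimple Lie subalgebra, 𝔥' a Cartan subalgebra of 𝔤', and α a root of (𝔤',𝔥') with coroot h_α ∈ 𝔥' and root spaces 𝔤'_α, 𝔤'_{−α} ⊆ 𝔤'. Regard 𝔤 as a 𝔤'-module via the adjoint action. Let 𝔲 ⊆ 𝔤 be an 𝔥'-invariant subspace such that ⁅𝔤'_α, 𝔲⁆ ⊆ 𝔲, 𝔤'_α ⊆ 𝔲 and 𝔤'_{−α} ∩ 𝔲 = 0. Then the trace of ad(h_α) acting on 𝔲 is a strictly positive integer; equivalently, writing ρ_𝔲 ∈ (𝔥')* for half the sum of the 𝔥'-weights of 𝔲 counted with multiplicity, one has ρ_𝔲(h_α) > 0. (Applied with 𝔤' = 𝔤 and 𝔲 the nilradical of a parabolic subalgebra this gives the paper's inequality (ρ_𝔲, α) > 0 for all α ∈ Δ(𝔲,𝔱), and applied to a weakly 𝔤'-compatible parabolic it gives (ρ_𝔲|_{𝔱'},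 α) > 0 for all α ∈ Δ(𝔲', 𝔱').) -/
/-!
Let `(h, e, f)` be an `sl₂`-triple of `𝔤'` with `h` the coroot of `α`, acting on `𝔤` by `ad`.
In a finite-dimensional `sl₂`-module the generalized eigenvalues of `h` are integers, and `e ^ k`
is injective on the generalized `(-k)`-eigenspace, which it maps to the `k`-eigenspace. Since `𝔲`
is stable under `h` and `e`, this gives `dim 𝔲₋ₖ ≤ dim 𝔲ₖ` for the generalized eigenspaces of `h`
on `𝔲`, so `tr (ad h|𝔲) = ∑ₖ k (dim 𝔲ₖ - dim 𝔲₋ₖ)` is a sum of non-negative integers. The term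
`k = 2` is positive: `[e, [e, f]] = -2e` lies in `𝔲` while `f` does not, so `e ∈ 𝔲₂` is not in the
image of `𝔲₋₂` under `e ^ 2`.
-/

open Module Set
open scoped Pointwise

attribute [local instance 100] LieRing.ofAssociativeRing

namespace Module.End

section CommRing

variable {R M : Type*} [CommRing R] [AddCommGroup M] [Module R M]

lemma pow_sub_smul_one_apply {f : End R M} {x : M} {ν : R} (hx : f x = ν • x) (μ : R) (N : ℕ) :
    ((f - μ • 1) ^ N) x = (ν - μ) ^ N • x := by
  induction N with
  | zero => simp
  | succ N ih =>
    rw [pow_succ', mul_apply, ih, map_smul, LinearMap.sub_apply, hx, LinearMap.smul_apply,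
      one_apply, ← sub_smul, smul_smul, pow_succ]

lemma mapsTo_maxGenEigenspace_of_comp_eq {N : Type*} [AddCommGroup N] [Module R N]
    {A : End R M} {B : End R N} {f : M →ₗ[R] N} (h : B ∘ₗ f = f ∘ₗ A) (μ : R) :
    MapsTo f (A.maxGenEigenspace μ) (B.maxGenEigenspace μ) := by
  intro v hv
  obtain ⟨k, hk⟩ := (A.mem_maxGenEigenspace μ v).mp hv
  have hsub : (B - μ • 1) ∘ₗ f = f ∘ₗ (A - μ • 1) := by
    rw [LinearMap.sub_comp, LinearMap.comp_sub, h]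
    ext
    simp
  refine (B.mem_maxGenEigenspace μ _).mpr ⟨k, ?_⟩
  rw [← LinearMap.comp_apply, commute_pow_left_of_commute hsub, LinearMap.comp_apply, hk, map_zero]

end CommRing

variable {K V : Type*} [Field K] [AddCommGroup V] [Module K V]

lemma maxGenEigenspace_zero_eq_bot {μ : K} (hμ : μ ≠ 0) :
    (0 : End K V).maxGenEigenspace μ = ⊥ := by
  refine eq_bot_iff.mpr fun v hv ↦ ?_
  obtain ⟨k, hk⟩ := (mem_maxGenEigenspace _ μ v).mp hv
  rw [zero_sub, ← neg_smul, smul_pow, one_pow, LinearMap.smul_apply, one_apply] at hk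
  exact (smul_eq_zero.mp hk).resolve_left (pow_ne_zero _ (neg_ne_zero.mpr hμ))

variable [FiniteDimensional K V]

lemma trace_restrict_maxGenEigenspace (f : End K V) (μ : K) :
    LinearMap.trace K _ (f.restrict (f.mapsTo_maxGenEigenspace_of_comm rfl μ)) =
      finrank K (f.maxGenEigenspace μ) • μ := by
  have hsplit : f.restrict (f.mapsTo_maxGenEigenspace_of_comm rfl μ) =
      (f - algebraMap K (End K V) μ).restrict
        (f.mapsTo_maxGenEigenspace_of_comm (Algebra.mul_sub_algebraMap_commutes f μ) μ) +
      μ • 1 := by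
    ext x
    change f x = (f - algebraMap K _ μ) x + μ • x
    simp
  rw [hsplit, map_add, (LinearMap.isNilpotent_trace_of_isNilpotent
    (f.isNilpotent_restrict_maxGenEigenspace_sub_algebraMap μ)).eq_zero, map_smul,
    LinearMap.trace_one, zero_add, smul_eq_mul, nsmul_eq_mul, mul_comm]

variable [IsAlgClosed K]

lemma trace_eq_sum_finrank_smul (f : End K V) {T : Finset K}
    (hT : ∀ μ, f.maxGenEigenspace μ ≠ ⊥ → μ ∈ T) :
    LinearMap.trace K V f = ∑ μ ∈ T, finrank K (f.maxGenEigenspace μ) • μ := by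
  classical
  have hfin : {μ | f.maxGenEigenspace μ ≠ ⊥}.Finite :=
    WellFoundedGT.finite_ne_bot_of_iSupIndep f.independent_maxGenEigenspace
  rw [LinearMap.trace_eq_sum_trace_restrict'
    (DirectSum.isInternal_submodule_of_iSupIndep_of_iSup_eq_top f.independent_maxGenEigenspace
      f.iSup_maxGenEigenspace_eq_top) hfin (fun μ ↦ f.mapsTo_maxGenEigenspace_of_comm rfl μ)]
  simp_rw [trace_restrict_maxGenEigenspace]
  refine Finset.sum_subset (fun μ hμ ↦ hT μ (by simpa using hμ)) fun μ _ hμ ↦ ?_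
  simp only [Set.Finite.mem_toFinset, Set.mem_ofPred_eq, not_not] at hμ
  simp [Submodule.finrank_eq_zero.mpr hμ]

lemma exists_trace_eq_sum_finrank_smul_intCast [CharZero K] (f : End K V)
    (hf : ∀ μ, f.maxGenEigenspace μ ≠ ⊥ → ∃ z : ℤ, μ = z) :
    ∃ s : Finset ℤ, (∀ z ∉ s, f.maxGenEigenspace (z : K) = ⊥) ∧
      LinearMap.trace K V f = ∑ z ∈ s, finrank K (f.maxGenEigenspace (z : K)) • (z : K) := by
  have hfin : {μ | f.maxGenEigenspace μ ≠ ⊥}.Finite :=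
    WellFoundedGT.finite_ne_bot_of_iSupIndep f.independent_maxGenEigenspace
  refine ⟨(hfin.preimage Int.cast_injective.injOn).toFinset, fun z hz ↦ by simpa using hz, ?_⟩
  rw [f.trace_eq_sum_finrank_smul (T := Finset.map ⟨((↑) : ℤ → K), Int.cast_injective⟩ _) fun μ hμ ↦ ?_,
    Finset.sum_map]
  · rfl
  · obtain ⟨z, rfl⟩ := hf μ hμ
    exact Finset.mem_map_of_mem _ (by simpa using hμ)

end Module.End

theorem Int.sum_mul_pos_of_apply_neg_le {d : ℤ → ℕ} {s : Finset ℤ} (hs : ∀ z ∉ s, d z = 0)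
    (hle : ∀ n : ℕ, d (-n) ≤ d n) {k : ℕ} (hk : d (-k) < d k) :
    0 < ∑ z ∈ s, z * d z := by
  classical
  set T := s ∪ -s
  have hT : -T = T := by ext z; simp [T, or_comm]
  have hsT : ∑ z ∈ s, z * d z = ∑ z ∈ T, z * d z :=
    Finset.sum_subset Finset.subset_union_left fun z _ hz ↦ by simp [hs z hz]
  have hneg : ∑ z ∈ T, z * d z = ∑ z ∈ T, -z * d (-z) := by
    conv_lhs => rw [← hT, Finset.sum_neg_index]
  have hterm (z : ℤ) : 0 ≤ z * ((d z : ℤ) - d (-z)) := by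
    obtain ⟨n, rfl | rfl⟩ := Int.eq_nat_or_neg z
    · have := hle n; nlinarith
    · have := hle n; simp only [neg_neg]; nlinarith
  have hk₀ : 0 < k := Nat.pos_of_ne_zero (by rintro rfl; simp at hk)
  have hkT : (k : ℤ) ∈ T := Finset.mem_union_left _ (by by_contra h; simp [hs _ h] at hk)
  have hpos : 0 < ∑ z ∈ T, z * ((d z : ℤ) - d (-z)) :=
    Finset.sum_pos' (fun z _ ↦ hterm z) ⟨k, hkT, mul_pos (by positivity) (by omega)⟩
  have htwice : 2 * ∑ z ∈ T, z * d z = ∑ z ∈ T, z * ((d z : ℤ) - d (-z)) := by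
    rw [two_mul]
    nth_rw 2 [hneg]
    rw [← Finset.sum_add_distrib]
    exact Finset.sum_congr rfl fun z _ ↦ by ring
  omega

lemma IsSl2Triple.map {R L L' : Type*} [CommRing R] [LieRing L] [LieAlgebra R L] [LieRing L']
    [LieAlgebra R L'] {h e f : L} (t : IsSl2Triple h e f) (φ : L →ₗ⁅R⁆ L') (hφ : φ h ≠ 0) :
    IsSl2Triple (φ h) (φ e) (φ f) where
  h_ne_zero := hφ
  lie_e_f := by rw [← LieHom.map_lie, t.lie_e_f]
  lie_h_e_nsmul := by rw [← LieHom.map_lie, t.lie_h_e_nsmul, map_nsmul]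
  lie_h_f_nsmul := by rw [← LieHom.map_lie, t.lie_h_f_nsmul, map_neg, map_nsmul]

namespace IsSl2Triple

variable {K V : Type*} [Field K] [AddCommGroup V] [Module K V] {H E F : Module.End K V}

lemma mapQ (t : IsSl2Triple H E F) (S : Submodule K V) (hH : S ≤ S.comap H)
    (hE : S ≤ S.comap E) (hF : S ≤ S.comap F) (h0 : S.mapQ S H hH ≠ 0) :
    IsSl2Triple (S.mapQ S H hH) (S.mapQ S E hE) (S.mapQ S F hF) where
  h_ne_zero := h0
  lie_e_f := Submodule.linearMap_qext S <| LinearMap.ext fun x ↦ by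
    simpa [Ring.lie_def] using congr(S.mkQ ($t.lie_e_f x))
  lie_h_e_nsmul := Submodule.linearMap_qext S <| LinearMap.ext fun x ↦ by
    simpa [Ring.lie_def] using congr(S.mkQ ($t.lie_h_e_nsmul x))
  lie_h_f_nsmul := Submodule.linearMap_qext S <| LinearMap.ext fun x ↦ by
    simpa [Ring.lie_def] using congr(S.mkQ ($t.lie_h_f_nsmul x))

lemma semiconjBy_e (t : IsSl2Triple H E F) (μ : K) :
    SemiconjBy E (H - μ • 1) (H - (μ + 2) • 1) := by
  have h := t.lie_h_e_smul K
  rw [Ring.lie_def, sub_eq_iff_eq_add] at h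
  simp only [SemiconjBy, mul_sub, sub_mul, mul_smul_comm, smul_mul_assoc, mul_one, one_mul, h]
  module

lemma mapsTo_maxGenEigenspace_e (t : IsSl2Triple H E F) (μ : K) :
    MapsTo E (H.maxGenEigenspace μ) (H.maxGenEigenspace (μ + 2)) := by
  intro v hv
  obtain ⟨k, hk⟩ := (H.mem_maxGenEigenspace μ v).mp hv
  refine (H.mem_maxGenEigenspace _ _).mpr ⟨k, ?_⟩
  rw [← Module.End.mul_apply, ← ((t.semiconjBy_e μ).pow_right k).eq, Module.End.mul_apply, hk,
    map_zero]

lemma mapsTo_maxGenEigenspace_e_pow (t : IsSl2Triple H E F) (μ : K) (k : ℕ) :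
    MapsTo (E ^ k) (H.maxGenEigenspace μ) (H.maxGenEigenspace (μ + 2 * k)) := by
  induction k with
  | zero => intro v hv; simpa using hv
  | succ k ih =>
    rw [pow_succ', Module.End.coe_mul, Nat.cast_succ, mul_add_one, ← add_assoc]
    exact (t.mapsTo_maxGenEigenspace_e _).comp ih

lemma mapsTo_maxGenEigenspace_neg_e_pow (t : IsSl2Triple H E F) (k : ℕ) :
    MapsTo (E ^ k) (H.maxGenEigenspace (-k)) (H.maxGenEigenspace k) := by
  simpa [two_mul] using t.mapsTo_maxGenEigenspace_e_pow (-k) k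

lemma map_e_pow_inf_maxGenEigenspace_le (t : IsSl2Triple H E F) {U : Submodule K V}
    (hUE : ∀ x ∈ U, E x ∈ U) (k : ℕ) :
    (U ⊓ H.maxGenEigenspace (-k)).map (E ^ k) ≤ U ⊓ H.maxGenEigenspace k := by
  rintro _ ⟨x, ⟨hxU, hx⟩, rfl⟩
  exact ⟨Module.End.pow_apply_mem_of_forall_mem k hUE x hxU,
    t.mapsTo_maxGenEigenspace_neg_e_pow k hx⟩

variable (F) in
def stringSpan (m : V) (n : ℕ) : Submodule K V :=
  Submodule.span K (range fun i : Fin (n + 1) ↦ (F ^ (i : ℕ)) m)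

lemma pow_apply_mem_stringSpan {m : V} {n i : ℕ} (hi : i ≤ n) : (F ^ i) m ∈ stringSpan F m n :=
  Submodule.subset_span ⟨⟨i, Nat.lt_succ_of_le hi⟩, rfl⟩

namespace HasPrimitiveVectorWith

variable {t : IsSl2Triple H E F} {m : V} {μ : K} {n : ℕ}

lemma e_apply_eq_zero (P : t.HasPrimitiveVectorWith m μ) : E m = 0 := by
  simpa using P.lie_e

lemma apply_pow_f (P : t.HasPrimitiveVectorWith m μ) (i : ℕ) :
    H ((F ^ i) m) = (μ - 2 * i) • (F ^ i) m := by
  simpa using P.lie_h_pow_toEnd_f i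

lemma e_apply_pow_f_succ (P : t.HasPrimitiveVectorWith m μ) (i : ℕ) :
    E ((F ^ (i + 1)) m) = ((i + 1) * (μ - i)) • (F ^ i) m := by
  simpa using P.lie_e_pow_succ_toEnd_f i

lemma stringSpan_le_comap_h (P : t.HasPrimitiveVectorWith m (n : K)) :
    stringSpan F m n ≤ (stringSpan F m n).comap H :=
  Submodule.span_le.mpr <| range_subset_iff.mpr fun i ↦ by
    simpa [P.apply_pow_f] using Submodule.smul_mem _ _ (pow_apply_mem_stringSpan i.is_le)

lemma stringSpan_le_comap_e (P : t.HasPrimitiveVectorWith m (n : K)) :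
    stringSpan F m n ≤ (stringSpan F m n).comap E :=
  Submodule.span_le.mpr <| range_subset_iff.mpr fun
    | ⟨0, _⟩ => by simp [P.e_apply_eq_zero]
    | ⟨i + 1, hi⟩ => by
      simpa [P.e_apply_pow_f_succ] using
        Submodule.smul_mem _ _ (pow_apply_mem_stringSpan (by omega))

variable [CharZero K]

lemma pow_f_succ_apply_eq_zero [FiniteDimensional K V] (P : t.HasPrimitiveVectorWith m (n : K)) :
    (F ^ (n + 1)) m = 0 := by
  simpa using P.pow_toEnd_f_eq_zero_of_eq_nat rfl

lemma stringSpan_le_comap_f [FiniteDimensional K V] (P : t.HasPrimitiveVectorWith m (n : K)) :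
    stringSpan F m n ≤ (stringSpan F m n).comap F := by
  refine Submodule.span_le.mpr <| range_subset_iff.mpr fun i ↦ ?_
  rw [SetLike.mem_coe, Submodule.mem_comap, ← Module.End.mul_apply, ← pow_succ']
  rcases i.is_le.lt_or_eq with hi | hi
  · exact pow_apply_mem_stringSpan hi
  · simp [hi, P.pow_f_succ_apply_eq_zero]

lemma linearIndependent_pow_f_apply (P : t.HasPrimitiveVectorWith m (n : K)) :
    LinearIndependent K fun i : Fin (n + 1) ↦ (F ^ (i : ℕ)) m :=
  Module.End.eigenvectors_linearIndependent' H (fun i : Fin (n + 1) ↦ (n - 2 * i : K))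
    (fun i j hij ↦ Fin.ext (by simpa using hij)) _ fun i ↦
      ⟨Module.End.mem_eigenspace_iff.mpr (P.apply_pow_f i),
        by simpa using P.pow_toEnd_f_ne_zero_of_eq_nat rfl i.is_le⟩

lemma e_pow_apply_pow_f_ne_zero (P : t.HasPrimitiveVectorWith m (n : K)) {a i : ℕ}
    (hai : a ≤ i) (hin : i ≤ n) : (E ^ a) ((F ^ i) m) ≠ 0 := by
  induction a generalizing i with
  | zero => simpa using P.pow_toEnd_f_ne_zero_of_eq_nat rfl hin
  | succ a ih =>
    obtain ⟨i, rfl⟩ : ∃ i', i = i' + 1 := ⟨i - 1, by omega⟩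
    rw [pow_succ, Module.End.mul_apply, P.e_apply_pow_f_succ, map_smul]
    refine smul_ne_zero (mul_ne_zero (by norm_cast) ?_) (ih (by omega) (by omega))
    rw [sub_ne_zero, Nat.cast_inj.ne]
    omega

lemma eq_zero_of_mem_stringSpan (P : t.HasPrimitiveVectorWith m (n : K)) {k : ℕ} {v : V}
    (hvS : v ∈ stringSpan F m n) (hv : v ∈ H.maxGenEigenspace (-k)) (hEv : (E ^ k) v = 0) :
    v = 0 := by
  classical
  obtain ⟨c, rfl⟩ := (Submodule.mem_span_range_iff_exists_fun K).mp hvS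
  obtain ⟨N, hN⟩ := (H.mem_maxGenEigenspace _ _).mp hv
  -- only the string vector of weight `-k` can occur in `v`
  have hc (i : Fin (n + 1)) (hi : c i ≠ 0) : 2 * (i : ℕ) = n + k := by
    have hsum : ∑ j, (c j * (n - 2 * j + k : K) ^ N) • (F ^ (j : ℕ)) m = 0 := by
      rw [← hN, map_sum]
      refine Finset.sum_congr rfl fun j _ ↦ ?_
      rw [map_smul, Module.End.pow_sub_smul_one_apply (P.apply_pow_f j), smul_smul,
        sub_neg_eq_add]
    have := linearIndependent_iff'.mp P.linearIndependent_pow_f_apply _ _ hsum i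
      (Finset.mem_univ i)
    have h0 : (n - 2 * i + k : K) = 0 :=
      eq_zero_of_pow_eq_zero ((mul_eq_zero.mp this).resolve_left hi)
    exact_mod_cast (by linear_combination -h0 : (2 * i : K) = n + k)
  by_contra hne
  obtain ⟨j, hj⟩ : ∃ j, c j ≠ 0 := by
    by_contra!
    simp_all
  have hsingle : ∑ i, c i • (F ^ (i : ℕ)) m = c j • (F ^ (j : ℕ)) m := by
    refine Finset.sum_eq_single j (fun i _ hij ↦ ?_) (by simp)
    by_contra h
    exact hij (Fin.ext (by have := hc i (left_ne_zero_of_smul h); have := hc j hj; omega))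
  rw [hsingle, map_smul, smul_eq_zero] at hEv
  have := hc j hj
  exact hEv.elim hj (P.e_pow_apply_pow_f_ne_zero (by omega) j.is_le)

end HasPrimitiveVectorWith

variable [CharZero K]

lemma exists_hasPrimitiveVectorWith_of_maxGenEigenspace_ne_bot [FiniteDimensional K V]
    (t : IsSl2Triple H E F) {μ : K} (hμ : H.maxGenEigenspace μ ≠ ⊥) :
    ∃ (j : ℕ) (m : V), t.HasPrimitiveVectorWith m (μ + 2 * j) := by
  have hex : ∃ j : ℕ, H.maxGenEigenspace (μ + 2 * j) = ⊥ := by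
    by_contra! h
    have hinj : Function.Injective fun j : ℕ ↦ μ + 2 * j := fun a b hab ↦ by simpa using hab
    exact infinite_range_of_injective hinj <|
      (WellFoundedGT.finite_ne_bot_of_iSupIndep H.independent_maxGenEigenspace).subset
        (range_subset_iff.mpr h)
  obtain ⟨j, hj, hj₁⟩ := Nat.exists_not_and_succ_of_not_zero_of_exists (by simpa using hμ) hex
  have hev : H.HasEigenvalue (μ + 2 * j) :=
    (Module.End.hasUnifEigenvalue_iff_hasUnifEigenvalue_one (by simp)).mp hj
  obtain ⟨m, hm⟩ := hev.exists_hasEigenvector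
  refine ⟨j, m, hm.2, hm.apply_eq_smul, ?_⟩
  have := t.mapsTo_maxGenEigenspace_e _ (H.eigenspace_le_maxGenEigenspace hm.1)
  rwa [add_assoc, ← mul_add_one, ← Nat.cast_succ, hj₁, SetLike.mem_coe, Submodule.mem_bot] at this

lemma exists_int_eq_of_maxGenEigenspace_ne_bot [FiniteDimensional K V]
    (t : IsSl2Triple H E F) {μ : K} (hμ : H.maxGenEigenspace μ ≠ ⊥) : ∃ z : ℤ, μ = z := by
  obtain ⟨j, m, P⟩ := t.exists_hasPrimitiveVectorWith_of_maxGenEigenspace_ne_bot hμ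
  obtain ⟨n, hn⟩ := P.exists_nat
  exact ⟨n - 2 * j, by push_cast; linear_combination hn⟩

variable [IsAlgClosed K] [FiniteDimensional K V]

/-- Induction on `dim V`: the span `S` of the string through a primitive vector is a submodule,
so the claim for `V ⧸ S` puts `v` in `S`, where the string basis settles it. -/
theorem eq_zero_of_e_pow_apply_eq_zero (t : IsSl2Triple H E F) {k : ℕ} (hk : 0 < k) {v : V}
    (hv : v ∈ H.maxGenEigenspace (-k)) (hEv : (E ^ k) v = 0) : v = 0 := by
  induction hd : finrank K V using Nat.strong_induction_on generalizing V with
  | _ d IH =>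
  rcases subsingleton_or_nontrivial V with hV | hV
  · exact Subsingleton.elim _ _
  obtain ⟨μ, m, hm, P⟩ := t.exists_hasPrimitiveVectorWith (R := K) (M := V)
  obtain ⟨n, rfl⟩ := P.exists_nat
  set S := stringSpan F m n
  have hH := P.stringSpan_le_comap_h
  refine P.eq_zero_of_mem_stringSpan ?_ hv hEv
  rw [← Submodule.Quotient.mk_eq_zero, ← Submodule.mkQ_apply]
  have hvS : S.mkQ v ∈ Module.End.maxGenEigenspace (S.mapQ S H hH) (-k) :=
    Module.End.mapsTo_maxGenEigenspace_of_comp_eq (S.mapQ_mkQ S H) _ hv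
  by_cases h0 : S.mapQ S H hH = 0
  · rwa [h0, Module.End.maxGenEigenspace_zero_eq_bot (by simpa using hk.ne')] at hvS
  have hSpos : 0 < finrank K S := Nat.pos_of_ne_zero fun h ↦
    hm ((Submodule.eq_bot_iff _).mp (Submodule.finrank_eq_zero.mp h) m
      (pow_apply_mem_stringSpan (i := 0) n.zero_le))
  refine IH _ ?_ (t.mapQ S hH P.stringSpan_le_comap_e P.stringSpan_le_comap_f h0) hvS ?_ rfl
  · have := S.finrank_quotient_add_finrank
    omega
  · rw [← LinearMap.comp_apply, Module.End.commute_pow_left_of_commute (S.mapQ_mkQ S E),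
      LinearMap.comp_apply, hEv, map_zero]

lemma finrank_map_e_pow (t : IsSl2Triple H E F) {k : ℕ} (hk : 0 < k) {W : Submodule K V}
    (hW : W ≤ H.maxGenEigenspace (-k)) : finrank K (W.map (E ^ k)) = finrank K W := by
  rw [← LinearMap.range_domRestrict]
  refine LinearMap.finrank_range_of_inj fun x y hxy ↦ ?_
  rw [← sub_eq_zero] at hxy ⊢
  refine Subtype.ext (t.eq_zero_of_e_pow_apply_eq_zero hk (hW (W.sub_mem x.2 y.2)) ?_)
  simpa using hxy

lemma finrank_inf_maxGenEigenspace_neg_le_s3 (t : IsSl2Triple H E F) {U : Submodule K V}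
    (hUE : ∀ x ∈ U, E x ∈ U) (k : ℕ) :
    finrank K ↥(U ⊓ H.maxGenEigenspace (-k)) ≤ finrank K ↥(U ⊓ H.maxGenEigenspace k) := by
  rcases k.eq_zero_or_pos with rfl | hk
  · rw [Nat.cast_zero, neg_zero]
  rw [← t.finrank_map_e_pow hk inf_le_right]
  exact Submodule.finrank_mono (t.map_e_pow_inf_maxGenEigenspace_le hUE k)

lemma finrank_inf_maxGenEigenspace_neg_lt (t : IsSl2Triple H E F) {U : Submodule K V}
    (hUE : ∀ x ∈ U, E x ∈ U) {k : ℕ} {y : V} (hy : y ∈ H.maxGenEigenspace (-k)) (hyU : y ∉ U)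
    (hEy : (E ^ k) y ∈ U) :
    finrank K ↥(U ⊓ H.maxGenEigenspace (-k)) < finrank K ↥(U ⊓ H.maxGenEigenspace k) := by
  have hk : 0 < k := Nat.pos_of_ne_zero (by rintro rfl; simp_all)
  rw [← t.finrank_map_e_pow hk inf_le_right]
  refine Submodule.finrank_lt_finrank_of_lt <|
    lt_of_le_of_ne (t.map_e_pow_inf_maxGenEigenspace_le hUE k) fun heq ↦ hyU ?_
  obtain ⟨u, ⟨huU, hu⟩, hEu⟩ : (E ^ k) y ∈ (U ⊓ H.maxGenEigenspace (-k)).map (E ^ k) :=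
    heq ▸ ⟨hEy, t.mapsTo_maxGenEigenspace_neg_e_pow k hy⟩
  have : y - u = 0 := t.eq_zero_of_e_pow_apply_eq_zero hk (sub_mem hy hu) (by simp [hEu])
  rwa [sub_eq_zero.mp this]

theorem exists_nat_pos_trace_restrict_eq (t : IsSl2Triple H E F) {U : Submodule K V}
    (hUH : ∀ x ∈ U, H x ∈ U) (hUE : ∀ x ∈ U, E x ∈ U) {k : ℕ} {y : V}
    (hy : y ∈ H.maxGenEigenspace (-k)) (hyU : y ∉ U) (hEy : (E ^ k) y ∈ U) :
    ∃ n : ℕ, 0 < n ∧ LinearMap.trace K U (H.restrict hUH) = n := by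
  obtain ⟨s, hs, htrace⟩ := Module.End.exists_trace_eq_sum_finrank_smul_intCast (H.restrict hUH)
    fun μ hμ ↦ t.exists_int_eq_of_maxGenEigenspace_ne_bot fun h ↦ hμ <| by
      rw [Module.End.maxGenEigenspace] at h ⊢
      rw [Module.End.genEigenspace_restrict, h, Submodule.comap_bot, Submodule.ker_subtype]
  set d : ℤ → ℕ := fun z ↦ finrank K ↥(U ⊓ H.maxGenEigenspace z)
  have hd (z : ℤ) : finrank K (Module.End.maxGenEigenspace (H.restrict hUH) z) = d z := by
    rw [Module.End.maxGenEigenspace, ← Submodule.finrank_map_subtype_eq, ← U.inf_genEigenspace]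
  have hle (n : ℕ) : d (-n) ≤ d n := by
    simp only [d]
    rw [Int.cast_neg, Int.cast_natCast]
    exact t.finrank_inf_maxGenEigenspace_neg_le_s3 hUE n
  have hlt : d (-k) < d k := by
    simp only [d]
    rw [Int.cast_neg, Int.cast_natCast]
    exact t.finrank_inf_maxGenEigenspace_neg_lt hUE hy hyU hEy
  have hpos := Int.sum_mul_pos_of_apply_neg_le (fun z hz ↦ by rw [← hd, hs z hz, finrank_bot])
    hle hlt
  refine ⟨(∑ z ∈ s, z * d z).toNat, by omega, ?_⟩
  rw [htrace, ← Int.cast_natCast, Int.toNat_of_nonneg hpos.le]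
  push_cast
  simp [hd, mul_comm]

end IsSl2Triple

open LieAlgebra LieModule LieAlgebra.IsKilling

/-- Let `𝔤` be a finite-dimensional complex Lie algebra, `𝔤'` a semisimple
subalgebra (semisimplicity expressed via `IsKilling`), `𝔥'` a Cartan subalgebra of `𝔤'`, `α` a
root of `(𝔤',𝔥')` with coroot `coroot α`, and regard `𝔤` as a `𝔤'`-module via the adjoint
action.  If `𝔲 ⊆ 𝔤` is an `𝔥'`-invariant subspace with `⁅𝔤'_α, 𝔲⁆ ⊆ 𝔲`, `𝔤'_α ⊆ 𝔲` and
`𝔤'_{-α} ∩ 𝔲 = 0`, then the trace of `ad(coroot α)` on `𝔲` (i.e. `ρ_𝔲(h_α)`, twice half the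
sum of the `𝔥'`-weights of `𝔲` evaluated at the coroot) is a strictly positive integer. -/
theorem trace_ad_coroot_pos
    {𝔤 : Type*} [LieRing 𝔤] [LieAlgebra ℂ 𝔤] [FiniteDimensional ℂ 𝔤]
    (𝔤' : LieSubalgebra ℂ 𝔤) [FiniteDimensional ℂ ↥𝔤'] [LieAlgebra.IsKilling ℂ ↥𝔤']
    (𝔥' : LieSubalgebra ℂ ↥𝔤') [𝔥'.IsCartanSubalgebra]
    (α : LieModule.Weight ℂ 𝔥' ↥𝔤') (hα : α.IsNonZero)
    (𝔲 : Submodule ℂ 𝔤)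
    (h𝔥 : ∀ (H : 𝔥') (u : 𝔤), u ∈ 𝔲 → (LieAlgebra.ad ℂ 𝔤 ((H : ↥𝔤') : 𝔤)) u ∈ 𝔲)
    (hbr : ∀ x : ↥𝔤', x ∈ rootSpace 𝔥' ⇑α → ∀ u ∈ 𝔲, ⁅(x : 𝔤), u⁆ ∈ 𝔲)
    (hsub : ∀ x : ↥𝔤', x ∈ rootSpace 𝔥' ⇑α → (x : 𝔤) ∈ 𝔲)
    (hdisj : ∀ x : ↥𝔤', x ∈ rootSpace 𝔥' (-⇑α) → (x : 𝔤) ∈ 𝔲 → x = 0) :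
    ∃ n : ℕ, 0 < n ∧
      LinearMap.trace ℂ 𝔲
        ((LieAlgebra.ad ℂ 𝔤 ((((coroot α : ↥𝔥') : ↥𝔤') : 𝔤))).restrict
          (fun u hu => h𝔥 (coroot α) u hu)) = (n : ℂ) := by
  obtain ⟨h, e, f, t, heα, hfα⟩ := exists_isSl2Triple_of_weight_isNonZero hα
  obtain rfl := t.h_eq_coroot hα heα hfα
  set φ := (ad ℂ 𝔤).comp 𝔤'.incl
  have hφ : φ (coroot α : 𝔥') ≠ 0 := fun h0 ↦ t.e_ne_zero <| by
    simpa [φ, ← LieSubalgebra.coe_bracket, t.lie_h_e_smul ℂ] using congr(($h0) (e : 𝔤))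
  have hf : (f : 𝔤) ∈ (φ (coroot α : 𝔥')).maxGenEigenspace (-(2 : ℕ)) := by
    refine Module.End.eigenspace_le_maxGenEigenspace (Module.End.mem_eigenspace_iff.mpr ?_)
    simp [φ, ← LieSubalgebra.coe_bracket, t.lie_lie_smul_f ℂ]
  have he : (φ e ^ 2) (f : 𝔤) ∈ 𝔲 := by
    have : ⁅e, ⁅e, f⁆⁆ = -(2 • e) := by rw [t.lie_e_f, ← lie_skew, t.lie_h_e_nsmul]
    simpa [φ, pow_two, ← LieSubalgebra.coe_bracket, this] using
      𝔲.neg_mem (𝔲.nsmul_mem (hsub e heα) 2)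
  exact (t.map φ hφ).exists_nat_pos_trace_restrict_eq _ (hbr e heα) hf
    (fun hf𝔲 ↦ t.f_ne_zero (hdisj f hfα hf𝔲)) he
end

section
/- Let Φ be a finite, reduced, crystallographic root system in a finite-dimensional real inner product space E, with Weyl group W (the group generated by the reflections in the roots of Φ) and a fixed set Φ⁺ of positive roots. Let λ₁ and λ₂ be dominant integral weights, i.e. (λ_i, α) ≥ 0 for all α ∈ Φ⁺ and 2(λ_i,α)/(α,α) ∈ ℤ for all α ∈ Φ. Then Co(W·λ₁) + Co(W·λ₂) = Co(W·(λ₁+λ₂)), where Co denotes the convex hull and + the Minkowski sum of subsets of E. -/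
/-!
By `convexHull_add` it suffices to show `μ₁ + w μ₂ ∈ Co(W·(μ₁ + μ₂))` for `w ∈ W`. Since positive
roots are sums of simple roots and a simple reflection `s_δ` permutes the positive roots other
than `δ`, every `w ∈ W` is a word in simple reflections and the exchange condition holds. Induct
on the length of a word `w = s_δ w'`: if `w'⁻¹ δ` is negative the exchange condition shortens it;
otherwise `⟪w' μ₂, δ⟫` and `⟪μ₁, δ⟫` are nonnegative, so `μ₁ + s_δ w' μ₂` lies on the segment from
`μ₁ + w' μ₂` (in the hull by induction) to its mirror image `s_δ μ₁ + s_δ w' μ₂`.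
-/

open scoped Pointwise RealInnerProductSpace

@[elab_as_elim]
lemma Set.Finite.induction_on_lt {ι : Type*} {s : Set ι} (hs : s.Finite) (f : ι → ℝ)
    {P : ι → Prop} {a : ι} (ha : a ∈ s) (h : ∀ a ∈ s, (∀ b ∈ s, f b < f a → P b) → P a) : P a :=
  (Set.wellFoundedOn_image.1 (hs.image f).wellFoundedOn).induction ha h

lemma AddSubmonoid.exists_nsmul_add_of_mem_closure {M : Type*} [AddCommMonoid M] {S : Set M}
    {z : M} (δ : M) (hz : z ∈ AddSubmonoid.closure S) :
    ∃ n : ℕ, ∃ y ∈ AddSubmonoid.closure (S \ {δ}), n • δ + y = z := by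
  induction hz using AddSubmonoid.closure_induction with
  | mem s hs =>
    by_cases hsδ : s = δ
    · exact ⟨1, 0, zero_mem _, by simp [hsδ]⟩
    · exact ⟨0, s, AddSubmonoid.subset_closure ⟨hs, hsδ⟩, by simp⟩
  | zero => exact ⟨0, 0, zero_mem _, by simp⟩
  | add a b _ _ ha hb =>
    obtain ⟨m, y, hy, rfl⟩ := ha
    obtain ⟨n, y', hy', rfl⟩ := hb
    exact ⟨m + n, y + y', add_mem hy hy', by rw [add_smul]; abel⟩

section Orbit

variable {V : Type*} [AddCommGroup V] [Module ℝ V] {G : Subgroup (V ≃ₗ[ℝ] V)}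

lemma apply_mem_convexHull_orbit {g : V ≃ₗ[ℝ] V} (hg : g ∈ G) {μ x : V}
    (hx : x ∈ convexHull ℝ ((fun h : V ≃ₗ[ℝ] V => h μ) '' (G : Set (V ≃ₗ[ℝ] V)))) :
    g x ∈ convexHull ℝ ((fun h : V ≃ₗ[ℝ] V => h μ) '' (G : Set (V ≃ₗ[ℝ] V))) := by
  have hgx : g x ∈ convexHull ℝ (g '' ((fun h : V ≃ₗ[ℝ] V => h μ) '' G)) :=
    (g : V →ₗ[ℝ] V).image_convexHull _ ▸ Set.mem_image_of_mem g hx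
  refine convexHull_mono ?_ hgx
  rintro _ ⟨_, ⟨h, hh, rfl⟩, rfl⟩
  exact ⟨g * h, mul_mem hg hh, rfl⟩

lemma convexHull_orbit_add {μ₁ μ₂ : V} (h : ∀ g ∈ G,
      μ₁ + g μ₂ ∈ convexHull ℝ ((fun g : V ≃ₗ[ℝ] V => g (μ₁ + μ₂)) '' (G : Set (V ≃ₗ[ℝ] V)))) :
    convexHull ℝ ((fun g : V ≃ₗ[ℝ] V => g μ₁) '' (G : Set (V ≃ₗ[ℝ] V))) +
        convexHull ℝ ((fun g : V ≃ₗ[ℝ] V => g μ₂) '' (G : Set (V ≃ₗ[ℝ] V))) =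
      convexHull ℝ ((fun g : V ≃ₗ[ℝ] V => g (μ₁ + μ₂)) '' (G : Set (V ≃ₗ[ℝ] V))) := by
  rw [← convexHull_add]
  refine le_antisymm (convexHull_min ?_ (convex_convexHull ℝ _)) (convexHull_mono ?_)
  · rintro _ ⟨_, ⟨g, hg, rfl⟩, _, ⟨g', hg', rfl⟩, rfl⟩
    have := apply_mem_convexHull_orbit hg (h _ (mul_mem (inv_mem hg) hg'))
    rwa [map_add, ← LinearEquiv.mul_apply, mul_inv_cancel_left] at this
  · rintro _ ⟨g, hg, rfl⟩
    exact ⟨g μ₁, ⟨g, hg, rfl⟩, g μ₂, ⟨g, hg, rfl⟩, (map_add g μ₁ μ₂).symm⟩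

end Orbit

namespace EuclideanRootSystem

variable {E : Type*} [NormedAddCommGroup E] [InnerProductSpace ℝ E]

noncomputable def reflection (α : E) : E ≃ₗ[ℝ] E :=
  LinearEquiv.ofInvolutive
    { toFun := fun x => x - (2 * ⟪x, α⟫ / ⟪α, α⟫) • α
      map_add' := fun x y => by simp only [inner_add_left, add_div, mul_add, add_smul]; abel
      map_smul' := fun t x => by
        simp only [real_inner_smul_left, RingHom.id_apply, smul_sub, smul_smul]
        congr 2; ring }
    fun x => by
      rcases eq_or_ne α 0 with rfl | hα
      · simp
      · have hαα : ⟪α, α⟫ ≠ 0 := inner_self_ne_zero.mpr hα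
        have h : 2 * ⟪x - (2 * ⟪x, α⟫ / ⟪α, α⟫) • α, α⟫ / ⟪α, α⟫ =
            -(2 * ⟪x, α⟫ / ⟪α, α⟫) := by
          rw [inner_sub_left, real_inner_smul_left]; field_simp; ring
        simp only [LinearMap.coe_mk, AddHom.coe_mk, h, neg_smul, sub_neg_eq_add, sub_add_cancel]

variable {α β x : E}

lemma reflection_apply (α x : E) : reflection α x = x - (2 * ⟪x, α⟫ / ⟪α, α⟫) • α := rfl

lemma reflection_reflection (α x : E) : reflection α (reflection α x) = x :=
  (reflection α).symm_apply_apply x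

lemma reflection_mul_self (α : E) : reflection α * reflection α = 1 :=
  LinearEquiv.ext (reflection_reflection α)

lemma reflection_inv (α : E) : (reflection α)⁻¹ = reflection α :=
  inv_eq_of_mul_eq_one_right (reflection_mul_self α)

lemma reflection_self (hα : α ≠ 0) : reflection α α = -α := by
  rw [reflection_apply, mul_div_assoc, div_self (inner_self_ne_zero.mpr hα)]; module

lemma reflection_neg (α : E) : reflection (-α) = reflection α :=
  LinearEquiv.ext fun x => by
    simp only [reflection_apply, inner_neg_right, inner_neg_left, neg_neg, smul_neg]
    rw [mul_neg, neg_div, neg_smul, neg_neg]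

lemma inner_reflection_reflection (α x y : E) :
    ⟪reflection α x, reflection α y⟫ = ⟪x, y⟫ := by
  rcases eq_or_ne α 0 with rfl | hα
  · simp [reflection_apply]
  · have hαα : ⟪α, α⟫ ≠ 0 := inner_self_ne_zero.mpr hα
    simp only [reflection_apply, inner_sub_left, inner_sub_right, real_inner_smul_left,
      real_inner_smul_right, real_inner_comm α y]
    field_simp
    ring

lemma reflection_map {u : E ≃ₗ[ℝ] E} (hu : ∀ x y, ⟪u x, u y⟫ = ⟪x, y⟫) (α x : E) :
    reflection (u α) (u x) = u (reflection α x) := by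
  simp only [reflection_apply, hu, map_sub, map_smul]

noncomputable def wordProd (L : List E) : E ≃ₗ[ℝ] E := (L.map reflection).prod

@[simp] lemma wordProd_nil : wordProd ([] : List E) = 1 := rfl

@[simp] lemma wordProd_cons (a : E) (L : List E) :
    wordProd (a :: L) = reflection a * wordProd L := rfl

@[simp] lemma wordProd_append (L L' : List E) :
    wordProd (L ++ L') = wordProd L * wordProd L' := by
  simp [wordProd]

lemma wordProd_reverse (L : List E) : wordProd L.reverse = (wordProd L)⁻¹ := by
  induction L with
  | nil => simp
  | cons a L ih => simp [ih, reflection_inv]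

lemma inner_wordProd_wordProd (L : List E) (x y : E) :
    ⟪wordProd L x, wordProd L y⟫ = ⟪x, y⟫ := by
  induction L with
  | nil => rfl
  | cons a L ih => exact (inner_reflection_reflection a _ _).trans ih

lemma inner_wordProd_left (L : List E) (x y : E) :
    ⟪wordProd L x, y⟫ = ⟪x, wordProd L.reverse y⟫ := by
  rw [← inner_wordProd_wordProd L.reverse, wordProd_reverse, ← LinearEquiv.mul_apply,
    inv_mul_cancel, LinearEquiv.coe_one, id]

lemma reflection_wordProd {L : List E} (α : E) :
    reflection (wordProd L α) = wordProd L * reflection α * (wordProd L)⁻¹ :=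
  LinearEquiv.ext fun x => by
    simpa using reflection_map (inner_wordProd_wordProd L) α ((wordProd L)⁻¹ x)

lemma add_mem_segment_reflection {a x β : E} (hx : ⟪x, β⟫ ≤ 0) (ha : 0 ≤ ⟪a, β⟫) :
    a + x ∈ segment ℝ (a + reflection β x) (reflection β (a + reflection β x)) := by
  rw [map_add, reflection_reflection, mem_segment_iff_sameRay]
  have hββ := real_inner_self_nonneg (x := β)
  have hx' : 0 ≤ -(2 * ⟪x, β⟫ / ⟪β, β⟫) :=
    neg_nonneg.2 (div_nonpos_of_nonpos_of_nonneg (by linarith) hββ)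
  have ha' : 0 ≤ 2 * ⟪a, β⟫ / ⟪β, β⟫ := by positivity
  have h₁ : a + x - (a + reflection β x) = -(2 * ⟪x, β⟫ / ⟪β, β⟫) • -β := by
    rw [reflection_apply]; module
  have h₂ : reflection β a + x - (a + x) = (2 * ⟪a, β⟫ / ⟪β, β⟫) • -β := by
    rw [reflection_apply]; module
  rw [h₁, h₂]
  exact ((SameRay.refl (-β)).nonneg_smul_left hx').nonneg_smul_right ha'

section Closure

variable {S : Set E} {z : E}

lemma inner_nonpos_of_mem_closure (h : ∀ s ∈ S, ⟪x, s⟫ ≤ 0)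
    (hz : z ∈ AddSubmonoid.closure S) : ⟪x, z⟫ ≤ 0 := by
  induction hz using AddSubmonoid.closure_induction with
  | mem s hs => exact h s hs
  | zero => simp
  | add a b _ _ ha hb => rw [inner_add_right]; linarith

lemma eq_zero_or_inner_pos_of_mem_closure (h : ∀ s ∈ S, 0 < ⟪x, s⟫)
    (hz : z ∈ AddSubmonoid.closure S) : z = 0 ∨ 0 < ⟪x, z⟫ := by
  induction hz using AddSubmonoid.closure_induction with
  | mem s hs => exact .inr (h s hs)
  | zero => exact .inl rfl
  | add a b _ _ ha hb =>
    rcases ha with rfl | ha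
    · simpa using hb
    · right
      rw [inner_add_right]
      rcases hb with rfl | hb
      · simpa using ha
      · linarith

end Closure

structure IsReducedRootSystem (Φ : Set E) : Prop where
  finite : Φ.Finite
  ne_zero : ∀ α ∈ Φ, α ≠ 0
  reflection_mem : ∀ α ∈ Φ, ∀ β ∈ Φ, reflection α β ∈ Φ
  pairing_int : ∀ α ∈ Φ, ∀ β ∈ Φ, ∃ n : ℤ, 2 * ⟪β, α⟫ / ⟪α, α⟫ = n
  reduced : ∀ α ∈ Φ, ∀ t : ℝ, t • α ∈ Φ → t = 1 ∨ t = -1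

def positiveRoots (Φ : Set E) (v : E) : Set E := {α ∈ Φ | 0 < ⟪v, α⟫}

def simpleRoots (Φ : Set E) (v : E) : Set E :=
  {δ ∈ positiveRoots Φ v |
    ∀ β ∈ positiveRoots Φ v, ∀ γ ∈ positiveRoots Φ v, β + γ ≠ δ}

variable {Φ : Set E} {v : E}

lemma mem_closure_simpleRoots (hfin : Φ.Finite) (hα : α ∈ positiveRoots Φ v) :
    α ∈ AddSubmonoid.closure (simpleRoots Φ v) := by
  refine (hfin.subset (Set.sep_subset _ _)).induction_on_lt (fun α => ⟪v, α⟫) hα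
    fun α hα ih => ?_
  by_cases hs : α ∈ simpleRoots Φ v
  · exact AddSubmonoid.subset_closure hs
  · obtain ⟨β, hβ, γ, hγ, rfl⟩ :
        ∃ β ∈ positiveRoots Φ v, ∃ γ ∈ positiveRoots Φ v, β + γ = α := by
      by_contra! h
      exact hs ⟨hα, h⟩
    have hβγ : ⟪v, β + γ⟫ = ⟪v, β⟫ + ⟪v, γ⟫ := inner_add_right v β γ
    exact add_mem (ih β hβ (by linarith [hγ.2])) (ih γ hγ (by linarith [hβ.2]))

namespace IsReducedRootSystem

lemma neg_mem (hΦ : IsReducedRootSystem Φ) (hα : α ∈ Φ) : -α ∈ Φ :=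
  reflection_self (hΦ.ne_zero α hα) ▸ hΦ.reflection_mem α hα α hα

lemma neg_mem_positiveRoots (hΦ : IsReducedRootSystem Φ) (hα : α ∈ Φ) (h : ⟪v, α⟫ < 0) :
    -α ∈ positiveRoots Φ v :=
  ⟨hΦ.neg_mem hα, by rw [inner_neg_right]; linarith⟩

lemma wordProd_mem (hΦ : IsReducedRootSystem Φ) {L : List E} (hL : ∀ a ∈ L, a ∈ Φ)
    (hα : α ∈ Φ) : wordProd L α ∈ Φ := by
  induction L with
  | nil => exact hα
  | cons a L ih =>
    exact hΦ.reflection_mem a (hL a List.mem_cons_self) _ (ih fun b hb => hL b (.tail a hb))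

lemma sub_mem_of_inner_lt (hΦ : IsReducedRootSystem Φ) (hα : α ∈ Φ) (hβ : β ∈ Φ)
    (h₀ : 0 < ⟪α, β⟫) (h : ⟪α, β⟫ < ⟪β, β⟫) : α - β ∈ Φ := by
  obtain ⟨n, hn⟩ := hΦ.pairing_int β hβ α hα
  have hββ : 0 < ⟪β, β⟫ := h₀.trans h
  have hn₀ : (0 : ℝ) < n := hn ▸ by positivity
  have hn₂ : (n : ℝ) < 2 := hn ▸ by rw [div_lt_iff₀ hββ]; linarith
  have hn₁ : n = 1 := by
    have : 0 < n := by exact_mod_cast hn₀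
    have : n < 2 := by exact_mod_cast hn₂
    omega
  have := hΦ.reflection_mem β hβ α hα
  rwa [reflection_apply, hn, hn₁, Int.cast_one, one_smul] at this

lemma sub_mem_or_sub_mem (hΦ : IsReducedRootSystem Φ) (hα : α ∈ Φ) (hβ : β ∈ Φ)
    (hne : α ≠ β) (h : 0 < ⟪α, β⟫) : α - β ∈ Φ ∨ β - α ∈ Φ := by
  by_cases hβ' : ⟪α, β⟫ < ⟪β, β⟫
  · exact .inl (hΦ.sub_mem_of_inner_lt hα hβ h hβ')
  by_cases hα' : ⟪β, α⟫ < ⟪α, α⟫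
  · exact .inr (hΦ.sub_mem_of_inner_lt hβ hα (real_inner_comm α β ▸ h) hα')
  refine absurd (sub_eq_zero.1 (real_inner_self_nonpos.1 ?_)) hne
  rw [inner_sub_sub_self]
  linarith [real_inner_comm α β]

variable {δ δ' : E}

lemma sub_notMem_of_mem_simpleRoots (hΦ : IsReducedRootSystem Φ)
    (hv : ∀ α ∈ Φ, ⟪v, α⟫ ≠ 0) (hδ : δ ∈ simpleRoots Φ v)
    (hδ' : δ' ∈ simpleRoots Φ v) : δ - δ' ∉ Φ := by
  intro h
  rcases (hv _ h).lt_or_gt with hneg | hpos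
  · exact hδ'.2 δ hδ.1 (-(δ - δ')) (hΦ.neg_mem_positiveRoots h hneg) (by abel)
  · exact hδ.2 δ' hδ'.1 (δ - δ') ⟨h, hpos⟩ (by abel)

lemma inner_nonpos_of_mem_simpleRoots (hΦ : IsReducedRootSystem Φ)
    (hv : ∀ α ∈ Φ, ⟪v, α⟫ ≠ 0) (hδ : δ ∈ simpleRoots Φ v)
    (hδ' : δ' ∈ simpleRoots Φ v) (hne : δ ≠ δ') :
    ⟪δ, δ'⟫ ≤ 0 := by
  by_contra! h
  rcases hΦ.sub_mem_or_sub_mem hδ.1.1 hδ'.1.1 hne h with h' | h'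
  · exact hΦ.sub_notMem_of_mem_simpleRoots hv hδ hδ' h'
  · exact hΦ.sub_notMem_of_mem_simpleRoots hv hδ' hδ h'

lemma exists_simpleRoot_inner_pos (hΦ : IsReducedRootSystem Φ)
    (hα : α ∈ positiveRoots Φ v) : ∃ δ ∈ simpleRoots Φ v, 0 < ⟪α, δ⟫ := by
  by_contra! h
  exact hΦ.ne_zero α hα.1 <| real_inner_self_nonpos.1 <|
    inner_nonpos_of_mem_closure h (mem_closure_simpleRoots hΦ.finite hα)

/-- Write `α` and `-(s_δ α)` as `m • δ + y` and `n • δ + y'` with `y, y'` sums of the other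
simple roots.  Then `y + y'` is a multiple of `δ` pairing nonpositively with `δ` but
nonnegatively with `v`, so `y = y' = 0` and `α` is a multiple of `δ`. -/
lemma reflection_mem_positiveRoots (hΦ : IsReducedRootSystem Φ)
    (hv : ∀ α ∈ Φ, ⟪v, α⟫ ≠ 0) (hδ : δ ∈ simpleRoots Φ v)
    (hα : α ∈ positiveRoots Φ v) (hne : α ≠ δ) :
    reflection δ α ∈ positiveRoots Φ v := by
  have hmem := hΦ.reflection_mem δ hδ.1.1 α hα.1
  refine ⟨hmem, (hv _ hmem).lt_or_gt.resolve_left fun hneg => hne ?_⟩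
  have hδδ : 0 < ⟪δ, δ⟫ := real_inner_self_pos.2 (hΦ.ne_zero δ hδ.1.1)
  obtain ⟨m, y, hy, hαy⟩ :=
    AddSubmonoid.exists_nsmul_add_of_mem_closure δ (mem_closure_simpleRoots hΦ.finite hα)
  obtain ⟨n, y', hy', hy'α⟩ := AddSubmonoid.exists_nsmul_add_of_mem_closure δ
    (mem_closure_simpleRoots hΦ.finite (hΦ.neg_mem_positiveRoots hmem hneg))
  set t := 2 * ⟪α, δ⟫ / ⟪δ, δ⟫ - m - n
  have hsum : y + y' = t • δ := by
    rw [reflection_apply] at hy'α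
    simp only [t, sub_smul, ← Nat.cast_smul_eq_nsmul ℝ] at hαy hy'α ⊢
    linear_combination (norm := module) hαy + hy'α
  have hother : ∀ s ∈ simpleRoots Φ v \ {δ}, 0 < ⟪v, s⟫ := fun s hs => hs.1.1.2
  have hδy := inner_nonpos_of_mem_closure
    (fun s hs => hΦ.inner_nonpos_of_mem_simpleRoots hv hδ hs.1 (Ne.symm hs.2)) (add_mem hy hy')
  rw [hsum, real_inner_smul_right] at hδy
  have hvy : ⟪v, y⟫ + ⟪v, y'⟫ = t * ⟪v, δ⟫ := by
    rw [← inner_add_right, hsum, real_inner_smul_right]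
  have hvy' : 0 ≤ ⟪v, y'⟫ := by
    rcases eq_zero_or_inner_pos_of_mem_closure hother hy' with rfl | h
    · simp
    · exact h.le
  rcases eq_zero_or_inner_pos_of_mem_closure hother hy with rfl | hvy₀
  · rw [add_zero] at hαy
    rcases hΦ.reduced δ hδ.1.1 m (by rw [Nat.cast_smul_eq_nsmul, hαy]; exact hα.1) with h | h
    · rw [← hαy, ← Nat.cast_smul_eq_nsmul ℝ, h, one_smul]
    · linarith [m.cast_nonneg (α := ℝ)]
  · nlinarith [hδ.1.2]

lemma exists_wordProd_eq_reflection (hΦ : IsReducedRootSystem Φ)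
    (hv : ∀ α ∈ Φ, ⟪v, α⟫ ≠ 0) (hα : α ∈ positiveRoots Φ v) :
    ∃ L : List E, (∀ a ∈ L, a ∈ simpleRoots Φ v) ∧ wordProd L = reflection α := by
  refine (hΦ.finite.subset (Set.sep_subset _ _)).induction_on_lt (fun α => ⟪v, α⟫) hα
    fun α hα ih => ?_
  obtain ⟨δ, hδ, hαδ⟩ := hΦ.exists_simpleRoot_inner_pos hα
  by_cases hne : α = δ
  · exact ⟨[δ], by simpa [hne] using hδ, by simp [hne]⟩
  have hβ := hΦ.reflection_mem_positiveRoots hv hδ hα hne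
  have hlt : ⟪v, reflection δ α⟫ < ⟪v, α⟫ := by
    have hδδ : 0 < ⟪δ, δ⟫ := real_inner_self_pos.2 (hΦ.ne_zero δ hδ.1.1)
    have : 0 < 2 * ⟪α, δ⟫ / ⟪δ, δ⟫ * ⟪v, δ⟫ := by have := hδ.1.2; positivity
    rw [reflection_apply, inner_sub_right, real_inner_smul_right]
    linarith
  obtain ⟨L, hL, hLβ⟩ := ih _ hβ hlt
  refine ⟨δ :: L ++ [δ], ?_, ?_⟩
  · simpa [or_imp, forall_and, hδ] using hL
  · have := reflection_wordProd (L := [δ]) (reflection δ α)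
    simp only [wordProd_cons, wordProd_nil, mul_one, reflection_reflection, reflection_inv] at this
    simp [hLβ, this, mul_assoc]

lemma exists_wordProd_eq_of_mem_closure (hΦ : IsReducedRootSystem Φ)
    (hv : ∀ α ∈ Φ, ⟪v, α⟫ ≠ 0) {g : E ≃ₗ[ℝ] E} (hg : g ∈ Subgroup.closure (reflection '' Φ)) :
    ∃ L : List E, (∀ a ∈ L, a ∈ simpleRoots Φ v) ∧ wordProd L = g := by
  induction hg using Subgroup.closure_induction with
  | mem s hs =>
    obtain ⟨α, hα, rfl⟩ := hs
    rcases (hv α hα).lt_or_gt with hneg | hpos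
    · simpa [reflection_neg] using
        hΦ.exists_wordProd_eq_reflection hv (hΦ.neg_mem_positiveRoots hα hneg)
    · exact hΦ.exists_wordProd_eq_reflection hv ⟨hα, hpos⟩
  | one => exact ⟨[], by simp, rfl⟩
  | mul g h _ _ ihg ihh =>
    obtain ⟨L, hL, rfl⟩ := ihg
    obtain ⟨L', hL', rfl⟩ := ihh
    exact ⟨L ++ L', by simpa [or_imp, forall_and] using ⟨hL, hL'⟩, wordProd_append L L'⟩
  | inv g _ ih =>
    obtain ⟨L, hL, rfl⟩ := ih
    exact ⟨L.reverse, by simpa using hL, wordProd_reverse L⟩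

lemma exists_shorter_wordProd (hΦ : IsReducedRootSystem Φ)
    (hv : ∀ α ∈ Φ, ⟪v, α⟫ ≠ 0) (hδ : δ ∈ simpleRoots Φ v) {L : List E}
    (hL : ∀ a ∈ L, a ∈ simpleRoots Φ v) (h : ⟪v, wordProd L δ⟫ < 0) :
    ∃ L' : List E, (∀ a ∈ L', a ∈ simpleRoots Φ v) ∧ L'.length < L.length ∧
      wordProd L * reflection δ = wordProd L' := by
  induction L with
  | nil => exact absurd h (by simpa using hδ.1.2.le)
  | cons a L ih =>
    have ha := hL a List.mem_cons_self
    have hL : ∀ b ∈ L, b ∈ simpleRoots Φ v := fun b hb => hL b (.tail a hb)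
    by_cases hLδ : ⟪v, wordProd L δ⟫ < 0
    · obtain ⟨L', hL', hlen, heq⟩ := ih hL hLδ
      refine ⟨a :: L', by simpa [ha] using hL', by simpa using hlen, ?_⟩
      rw [wordProd_cons, mul_assoc, heq, wordProd_cons]
    · have hmem : wordProd L δ ∈ Φ := hΦ.wordProd_mem (fun b hb => (hL b hb).1.1) hδ.1.1
      have hpos : wordProd L δ ∈ positiveRoots Φ v :=
        ⟨hmem, (hv _ hmem).lt_or_gt.resolve_left hLδ⟩
      -- `s_a` makes the positive root `wordProd L δ` negative, so it is `a`
      have heq : wordProd L δ = a := by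
        by_contra hne
        exact (hΦ.reflection_mem_positiveRoots hv ha hpos hne).2.not_gt h
      refine ⟨L, hL, by simp, ?_⟩
      rw [wordProd_cons, ← heq, reflection_wordProd]
      simp [mul_assoc, reflection_mul_self]

lemma add_wordProd_mem (hΦ : IsReducedRootSystem Φ) (hv : ∀ α ∈ Φ, ⟪v, α⟫ ≠ 0)
    {K : Set E} (hK : Convex ℝ K) (hKs : ∀ δ ∈ simpleRoots Φ v, ∀ y ∈ K, reflection δ y ∈ K)
    {μ₁ μ₂ : E} (hμ₁ : ∀ α ∈ positiveRoots Φ v, 0 ≤ ⟪μ₁, α⟫)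
    (hμ₂ : ∀ α ∈ positiveRoots Φ v, 0 ≤ ⟪μ₂, α⟫) (hμ : μ₁ + μ₂ ∈ K) (L : List E)
    (hL : ∀ a ∈ L, a ∈ simpleRoots Φ v) :
    μ₁ + wordProd L μ₂ ∈ K := by
  match L with
  | [] => simpa using hμ
  | δ :: L =>
    have hδ := hL δ List.mem_cons_self
    have hL : ∀ b ∈ L, b ∈ simpleRoots Φ v := fun b hb => hL b (.tail δ hb)
    have hmem : wordProd L.reverse δ ∈ Φ :=
      hΦ.wordProd_mem (fun b hb => (hL b (List.mem_reverse.1 hb)).1.1) hδ.1.1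
    rcases (hv _ hmem).lt_or_gt with hneg | hpos
    · obtain ⟨L', hL', hlen, heq⟩ :=
        hΦ.exists_shorter_wordProd hv hδ (by simpa using hL) hneg
      have hword : wordProd (δ :: L) = wordProd L'.reverse := by
        rw [wordProd_reverse, ← heq, wordProd_reverse, mul_inv_rev, reflection_inv, inv_inv,
          wordProd_cons]
      have hshorter : L'.length < L.length + 1 := by simp at hlen; omega
      rw [hword]
      exact add_wordProd_mem hΦ hv hK hKs hμ₁ hμ₂ hμ L'.reverse (by simpa using hL')
    · have hIH := add_wordProd_mem hΦ hv hK hKs hμ₁ hμ₂ hμ L hL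
      have hδμ : 0 ≤ ⟪wordProd L μ₂, δ⟫ :=
        inner_wordProd_left L μ₂ δ ▸ hμ₂ _ ⟨hmem, hpos⟩
      have hδx : ⟪reflection δ (wordProd L μ₂), δ⟫ ≤ 0 := by
        rw [← inner_reflection_reflection δ, reflection_reflection,
          reflection_self (hΦ.ne_zero δ hδ.1.1), inner_neg_right]
        linarith
      have hseg := add_mem_segment_reflection hδx (hμ₁ δ hδ.1)
      rw [reflection_reflection] at hseg
      exact hK.segment_subset hIH (hKs δ hδ _ hIH) hseg
termination_by L.length

end IsReducedRootSystem

end EuclideanRootSystem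

theorem convexHull_weylOrbit_add_general
    {E : Type*} [NormedAddCommGroup E] [InnerProductSpace ℝ E]
    (Φ : Set E) (hΦfin : Φ.Finite)
    (hΦne : ∀ α ∈ Φ, α ≠ 0)
    (hΦrefl : ∀ α ∈ Φ, ∀ β ∈ Φ, β - (2 * ⟪β, α⟫ / ⟪α, α⟫) • α ∈ Φ)
    (hΦcrys : ∀ α ∈ Φ, ∀ β ∈ Φ, ∃ n : ℤ, 2 * ⟪β, α⟫ / ⟪α, α⟫ = (n : ℝ))
    (hΦred : ∀ α ∈ Φ, ∀ t : ℝ, t • α ∈ Φ → t = 1 ∨ t = -1)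
    (v : E) (hv : ∀ α ∈ Φ, ⟪v, α⟫ ≠ 0)
    (W : Subgroup (E ≃ₗ[ℝ] E))
    (hW : W = Subgroup.closure
      {s : E ≃ₗ[ℝ] E | ∃ α ∈ Φ, ∀ x : E, s x = x - (2 * ⟪x, α⟫ / ⟪α, α⟫) • α})
    (μ₁ μ₂ : E)
    (hdom₁ : ∀ α ∈ Φ, 0 < ⟪v, α⟫ → 0 ≤ ⟪μ₁, α⟫)
    (hdom₂ : ∀ α ∈ Φ, 0 < ⟪v, α⟫ → 0 ≤ ⟪μ₂, α⟫) :
    convexHull ℝ ((fun g : E ≃ₗ[ℝ] E => g μ₁) '' (W : Set (E ≃ₗ[ℝ] E))) +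
      convexHull ℝ ((fun g : E ≃ₗ[ℝ] E => g μ₂) '' (W : Set (E ≃ₗ[ℝ] E))) =
      convexHull ℝ ((fun g : E ≃ₗ[ℝ] E => g (μ₁ + μ₂)) '' (W : Set (E ≃ₗ[ℝ] E))) := by
  open EuclideanRootSystem in
  have hΦ : IsReducedRootSystem Φ := ⟨hΦfin, hΦne, hΦrefl, hΦcrys, hΦred⟩
  have hW' : W = Subgroup.closure (reflection '' Φ) := by
    rw [hW]
    congr 1
    ext s
    simp only [Set.mem_ofPred_eq, Set.mem_image, LinearEquiv.ext_iff,
      eq_comm (a := reflection _)]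
    rfl
  refine convexHull_orbit_add fun g hg => ?_
  obtain ⟨L, hL, rfl⟩ := hΦ.exists_wordProd_eq_of_mem_closure hv (hW' ▸ hg)
  have hsimple : ∀ δ ∈ simpleRoots Φ v, reflection δ ∈ W :=
    fun δ hδ => hW' ▸ Subgroup.subset_closure ⟨δ, hδ.1.1, rfl⟩
  exact hΦ.add_wordProd_mem hv (convex_convexHull ℝ _)
    (fun δ hδ _ hy => apply_mem_convexHull_orbit (hsimple δ hδ) hy)
    (fun α hα => hdom₁ α hα.1 hα.2) (fun α hα => hdom₂ α hα.1 hα.2)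
    (subset_convexHull ℝ _ ⟨1, one_mem W, rfl⟩) L hL

/-- Let `Φ` be a finite, reduced, crystallographic root system in a
finite-dimensional real inner product space `E`, with Weyl group `W` (the subgroup of linear
automorphisms generated by the orthogonal reflections in the roots) and positive system `Φ⁺`
cut out by a regular vector `v`.  If `μ₁` and `μ₂` are dominant integral weights then
`Co(W·μ₁) + Co(W·μ₂) = Co(W·(μ₁+μ₂))` (convex hulls, Minkowski sum). -/
theorem convexHull_weylOrbit_add
    {E : Type*} [NormedAddCommGroup E] [InnerProductSpace ℝ E] [FiniteDimensional ℝ E]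
    (Φ : Set E) (hΦfin : Φ.Finite)
    (hΦne : ∀ α ∈ Φ, α ≠ 0)
    (hΦrefl : ∀ α ∈ Φ, ∀ β ∈ Φ, β - (2 * ⟪β, α⟫ / ⟪α, α⟫) • α ∈ Φ)
    (hΦcrys : ∀ α ∈ Φ, ∀ β ∈ Φ, ∃ n : ℤ, 2 * ⟪β, α⟫ / ⟪α, α⟫ = (n : ℝ))
    (hΦred : ∀ α ∈ Φ, ∀ t : ℝ, t • α ∈ Φ → t = 1 ∨ t = -1)
    (v : E) (hv : ∀ α ∈ Φ, ⟪v, α⟫ ≠ 0)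
    (W : Subgroup (E ≃ₗ[ℝ] E))
    (hW : W = Subgroup.closure
      {s : E ≃ₗ[ℝ] E | ∃ α ∈ Φ, ∀ x : E, s x = x - (2 * ⟪x, α⟫ / ⟪α, α⟫) • α})
    (μ₁ μ₂ : E)
    (hdom₁ : ∀ α ∈ Φ, 0 < ⟪v, α⟫ → 0 ≤ ⟪μ₁, α⟫)
    (hdom₂ : ∀ α ∈ Φ, 0 < ⟪v, α⟫ → 0 ≤ ⟪μ₂, α⟫)
    (hint₁ : ∀ α ∈ Φ, ∃ n : ℤ, 2 * ⟪μ₁, α⟫ / ⟪α, α⟫ = (n : ℝ))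
    (hint₂ : ∀ α ∈ Φ, ∃ n : ℤ, 2 * ⟪μ₂, α⟫ / ⟪α, α⟫ = (n : ℝ)) :
    convexHull ℝ ((fun g : E ≃ₗ[ℝ] E => g μ₁) '' (W : Set (E ≃ₗ[ℝ] E))) +
      convexHull ℝ ((fun g : E ≃ₗ[ℝ] E => g μ₂) '' (W : Set (E ≃ₗ[ℝ] E))) =
      convexHull ℝ ((fun g : E ≃ₗ[ℝ] E => g (μ₁ + μ₂)) '' (W : Set (E ≃ₗ[ℝ] E))) :=
  convexHull_weylOrbit_add_general Φ hΦfin hΦne hΦrefl hΦcrys hΦred v hv W hW μ₁ μ₂ hdom₁ hdom₂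
end

section
/- Let A be a unital associative ℂ-algebra of at most countable dimension over ℂ, and suppose A admits an infinite-dimensional simple left A-module M. Then for every n ≥ 1, every polynomial identity of A is a polynomial identity of the matrix algebra Mₙ(ℂ); consequently PIdeg(A) = ∞. -/
/-- A noncommutative polynomial with integer coefficients in `n` indeterminates (an element of
the free `ℤ`-algebra on `n` generators) is a *polynomial identity* of a ring `A` if it vanishes
under every substitution of elements of `A` for the indeterminates. -/
def IsPolyIdentity (A : Type*) [Ring A] {n : ℕ} (p : FreeAlgebra ℤ (Fin n)) : Prop :=
  ∀ v : Fin n → A, FreeAlgebra.lift ℤ v p = 0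

/-- The PI degree of a ring `A`:
`PIdeg A = sup {n ≥ 1 : every polynomial identity of A is a polynomial identity of Mₙ(ℂ)}`,
an element of `ℕ∞`. -/
noncomputable def PIdeg (A : Type*) [Ring A] : ℕ∞ :=
  sSup {N : ℕ∞ | ∃ n : ℕ, N = n ∧ 1 ≤ n ∧
    ∀ (m : ℕ) (p : FreeAlgebra ℤ (Fin m)),
      IsPolyIdentity A p → IsPolyIdentity (Matrix (Fin n) (Fin n) ℂ) p}

/-!
Dixmier's version of Schur's lemma: `End_A M` is a division algebra over `ℂ` of countable
dimension (`M` is cyclic, so `dim M ≤ dim A`), and a transcendental element `d` would give the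
uncountable linearly independent family `(d - c)⁻¹`; hence `End_A M = ℂ`. The Jacobson density
theorem then lets `A` act as any prescribed linear map on a finite-dimensional subspace `W ⊆ M`,
so `Mₙ(ℂ) ≅ End_ℂ W` is a quotient of the subalgebra of `A` stabilising an `n`-dimensional `W`.
Polynomial identities pass to subrings and to quotients.
-/

open Cardinal

universe u v w

/-- The double centralizer of `d` is a field containing `d`. -/
theorem Transcendental.lift_mk_le_lift_rank {K : Type u} {D : Type v} [Field K] [DivisionRing D]
    [Algebra K D] {d : D} (hd : Transcendental K d) :
    lift.{v} #K ≤ lift.{u} (Module.rank K D) := by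
  let E := Subalgebra.centralizer K (Set.centralizer {d})
  have hdE : d ∈ E := Set.subset_centralizer_centralizer rfl
  have hcomm : ∀ x ∈ E, ∀ y ∈ E, x * y = y * x :=
    Set.centralizer_centralizer_comm_of_comm (by simp)
  let : Field E := IsField.toField
    { exists_pair_ne := ⟨0, 1, zero_ne_one⟩
      mul_comm := fun x y => Subtype.ext (hcomm x x.2 y y.2)
      mul_inv_cancel := fun {x} hx => ⟨⟨(x : D)⁻¹, Set.inv_mem_centralizer₀ x.2⟩,
        Subtype.ext (mul_inv_cancel₀ fun h => hx (Subtype.ext h))⟩ }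
  have hx : Transcendental K (⟨d, hdE⟩ : E) := Subalgebra.transcendental_iff_transcendental_val.2 hd
  exact hx.linearIndependent_sub_inv.cardinal_lift_le_rank.trans
    (lift_le.2 (Submodule.rank_le (Subalgebra.toSubmodule E)))

theorem Algebra.IsAlgebraic.of_rank_le_aleph0 {K : Type u} {D : Type v} [Field K] [DivisionRing D]
    [Algebra K D] (hK : ℵ₀ < #K) (hD : Module.rank K D ≤ ℵ₀) : Algebra.IsAlgebraic K D :=
  ⟨fun _ => not_not.1 fun hd => hK.not_ge <| by
    simpa using Transcendental.lift_mk_le_lift_rank hd |>.trans (lift_le.2 hD)⟩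

section SimpleModule

variable {K : Type u} {A : Type v} {M : Type w} [Field K] [Ring A] [Algebra K A] [AddCommGroup M]
  [Module A M] [Module K M] [IsScalarTower K A M] [IsSimpleModule A M]

variable (K A M) in
theorem IsSimpleModule.lift_rank_le : lift.{v} (Module.rank K M) ≤ lift.{w} (Module.rank K A) := by
  have : Nontrivial M := IsSimpleModule.nontrivial A M
  obtain ⟨m, hm⟩ := exists_ne (0 : M)
  exact ((LinearMap.toSpanSingleton A M m).restrictScalars K).lift_rank_le_of_surjective
    (IsSimpleModule.toSpanSingleton_surjective A hm)

variable (K A M) in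
theorem IsSimpleModule.rank_end_le : Module.rank K (Module.End A M) ≤ Module.rank K M := by
  have : Nontrivial M := IsSimpleModule.nontrivial A M
  obtain ⟨m, hm⟩ := exists_ne (0 : M)
  let eval : Module.End A M →ₗ[K] M :=
    { toFun := fun f => f m
      map_add' := fun _ _ => rfl
      map_smul' := fun _ _ => rfl }
  refine eval.rank_le_of_injective fun f g hfg => ?_
  by_contra hne
  exact hm (LinearMap.injective_of_ne_zero (sub_ne_zero.2 hne)
    (by simpa [sub_eq_zero, eval] using hfg))

theorem IsSimpleModule.algebraMap_end_surjective_of_rank_le_aleph0 [IsAlgClosed K]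
    (hK : ℵ₀ < #K) (hA : Module.rank K A ≤ ℵ₀) :
    Function.Surjective (algebraMap K (Module.End A M)) := by
  classical
  have hM : Module.rank K M ≤ ℵ₀ := by
    simpa using (IsSimpleModule.lift_rank_le K A M).trans (lift_le.2 hA)
  have := Algebra.IsAlgebraic.of_rank_le_aleph0 hK ((IsSimpleModule.rank_end_le K A M).trans hM)
  exact IsAlgClosed.algebraMap_bijective_of_isIntegral.2

end SimpleModule

section Stabilizer

variable {R : Type u} {A : Type v} {M : Type w} [CommSemiring R] [Semiring A] [Algebra R A]
  [AddCommMonoid M] [Module A M] [Module R M] [IsScalarTower R A M]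

variable (A) in
def Submodule.stabilizer (W : Submodule R M) : Subalgebra R A where
  carrier := {a | ∀ w ∈ W, a • w ∈ W}
  mul_mem' ha hb w hw := by rw [mul_smul]; exact ha _ (hb w hw)
  add_mem' ha hb w hw := by rw [add_smul]; exact W.add_mem (ha w hw) (hb w hw)
  algebraMap_mem' c w hw := by rw [algebraMap_smul]; exact W.smul_mem c hw

variable (A) in
def Submodule.restrictStabilizer (W : Submodule R M) : W.stabilizer A →ₐ[R] Module.End R W where
  toFun a := (DistribSMul.toLinearMap R M (a : A)).restrict a.2
  map_one' := by ext; simp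
  map_mul' a b := by ext; exact mul_smul (a : A) b _
  map_zero' := by ext; simp
  map_add' a b := by ext; exact add_smul (a : A) b _
  commutes' c := by ext; simp

end Stabilizer

section Density

variable {K : Type u} {A : Type v} {M : Type w} [Field K] [Ring A] [Algebra K A] [AddCommGroup M]
  [Module A M] [Module K M] [IsScalarTower K A M]

theorem exists_smul_eq_of_algebraMap_end_surjective [IsSimpleModule A M]
    (hK : Function.Surjective (algebraMap K (Module.End A M))) (f : M →ₗ[K] M)
    {W : Submodule K M} (hW : W.FG) : ∃ a : A, ∀ w ∈ W, a • w = f w := by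
  obtain ⟨s, rfl⟩ := hW
  let F : Module.End (Module.End A M) M :=
    { toFun := f
      map_add' := f.map_add
      map_smul' := fun g m => by
        obtain ⟨c, rfl⟩ := hK g
        simp }
  obtain ⟨a, ha⟩ := jacobson_density F s
  refine ⟨a, fun w hw => ?_⟩
  induction hw using Submodule.span_induction with
  | mem m hm => exact (ha m hm).symm
  | zero => simp
  | add x y _ _ hx hy => simp [hx, hy]
  | smul c x _ hx => rw [smul_comm, hx, map_smul]

theorem Submodule.restrictStabilizer_surjective [IsSimpleModule A M]
    (hK : Function.Surjective (algebraMap K (Module.End A M))) {W : Submodule K M} (hW : W.FG) :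
    Function.Surjective (W.restrictStabilizer A) := by
  intro g
  obtain ⟨f, hf⟩ := LinearMap.exists_extend (W.subtype ∘ₗ g)
  obtain ⟨a, ha⟩ := exists_smul_eq_of_algebraMap_end_surjective hK f hW
  have hfa : ∀ w : W, a • (w : M) = g w := fun w => (ha w w.2).trans (LinearMap.congr_fun hf w)
  exact ⟨⟨a, fun w hw => hfa ⟨w, hw⟩ ▸ (g _).2⟩, LinearMap.ext fun w => Subtype.ext (hfa w)⟩

end Density

section PolyIdentity

variable {A B F : Type*} [Ring A] [Ring B] [FunLike F A B] [RingHomClass F A B] {m : ℕ}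
  {p : FreeAlgebra ℤ (Fin m)}

theorem map_freeAlgebra_lift (f : F) {X : Type*} (v : X → A) (x : FreeAlgebra ℤ X) :
    f (FreeAlgebra.lift ℤ v x) = FreeAlgebra.lift ℤ (f ∘ v) x := by
  have : (f : A →+* B).toIntAlgHom.comp (FreeAlgebra.lift ℤ v) = FreeAlgebra.lift ℤ (f ∘ v) :=
    FreeAlgebra.hom_ext (by ext; simp)
  exact DFunLike.congr_fun this x

theorem IsPolyIdentity.of_injective (f : F) (hf : Function.Injective f)
    (hp : IsPolyIdentity B p) : IsPolyIdentity A p :=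
  fun v => hf (by rw [map_freeAlgebra_lift, hp, map_zero])

theorem IsPolyIdentity.of_surjective (f : F) (hf : Function.Surjective f)
    (hp : IsPolyIdentity A p) : IsPolyIdentity B p := by
  intro v
  obtain ⟨u, rfl⟩ := hf.comp_left v
  rw [← map_freeAlgebra_lift, hp, map_zero]

end PolyIdentity

theorem isPolyIdentity_matrix_of_le_rank {K : Type u} {A : Type v} {M : Type w} [Field K] [Ring A]
    [Algebra K A] [AddCommGroup M] [Module A M] [Module K M] [IsScalarTower K A M]
    [IsSimpleModule A M] (hK : Function.Surjective (algebraMap K (Module.End A M)))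
    {n : ℕ} (hn : n ≤ Module.rank K M) {m : ℕ} {p : FreeAlgebra ℤ (Fin m)}
    (hp : IsPolyIdentity A p) : IsPolyIdentity (Matrix (Fin n) (Fin n) K) p := by
  obtain ⟨e, he⟩ := exists_linearIndependent_of_le_rank hn
  let W := Submodule.span K (Set.range e)
  let toMatrix := LinearMap.toMatrixAlgEquiv (Module.Basis.span he)
  exact (hp.of_injective (W.stabilizer A).val Subtype.val_injective).of_surjective
    ((toMatrix : Module.End K W →ₐ[K] _).comp (W.restrictStabilizer A))
    (toMatrix.surjective.comp <|
      Submodule.restrictStabilizer_surjective hK (Submodule.fg_span (Set.finite_range e)))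

theorem pIdeg_eq_top_of_forall_isPolyIdentity_matrix {A : Type*} [Ring A]
    (h : ∀ n : ℕ, ∀ (m : ℕ) (p : FreeAlgebra ℤ (Fin m)),
      IsPolyIdentity A p → IsPolyIdentity (Matrix (Fin n) (Fin n) ℂ) p) :
    PIdeg A = ⊤ :=
  ENat.sSup_eq_top_of_infinite <| Set.infinite_of_injective_forall_mem
    (f := fun n : ℕ => ((n + 1 : ℕ) : ℕ∞)) (fun a b hab => by simpa using hab)
    fun n => ⟨n + 1, rfl, n.succ_pos, h (n + 1)⟩

/-- Let `A` be a unital associative `ℂ`-algebra of at most countable dimension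
admitting an infinite-dimensional simple left `A`-module `M`.  Then for every `n ≥ 1` every
polynomial identity of `A` is a polynomial identity of `Mₙ(ℂ)`; consequently `PIdeg A = ∞`. -/
theorem pIdeg_eq_top_of_infinite_dimensional_simple
    {A : Type*} [Ring A] [Algebra ℂ A]
    (hdim : Module.rank ℂ A ≤ Cardinal.aleph0)
    (M : Type*) [AddCommGroup M] [Module A M] [Module ℂ M] [IsScalarTower ℂ A M]
    [IsSimpleModule A M]
    (hinf : ¬ FiniteDimensional ℂ M) :
    (∀ n : ℕ, 1 ≤ n →
      ∀ (m : ℕ) (p : FreeAlgebra ℤ (Fin m)),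
        IsPolyIdentity A p → IsPolyIdentity (Matrix (Fin n) (Fin n) ℂ) p) ∧
    PIdeg A = ⊤ := by
  have hK : Function.Surjective (algebraMap ℂ (Module.End A M)) :=
    IsSimpleModule.algebraMap_end_surjective_of_rank_le_aleph0
      (by rw [mk_complex]; exact aleph0_lt_continuum) hdim
  have hM (n : ℕ) : n ≤ Module.rank ℂ M :=
    natCast_lt_aleph0.le.trans (not_lt.1 fun h => hinf (Module.rank_lt_aleph0_iff.1 h))
  have hPI (n m : ℕ) (p : FreeAlgebra ℤ (Fin m)) (hp : IsPolyIdentity A p) :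
      IsPolyIdentity (Matrix (Fin n) (Fin n) ℂ) p :=
    isPolyIdentity_matrix_of_le_rank hK (hM n) hp
  exact ⟨fun n _ => hPI n, pIdeg_eq_top_of_forall_isPolyIdentity_matrix hPI⟩
end

section
/- Let 𝔤 be a finite-dimensional complex Lie algebra and 𝔤' ⊆ 𝔤 a Lie subalgebra. Let V be a nonzero U(𝔤)-module whose restriction to 𝔤' is semisimple, let A be the centralizer of the image of 𝔤' in U(𝔤)/Ann_{U(𝔤)}(V), and assume that for every simple 𝔤'-submodule V' of V the A-module Hom_{𝔤'}(V', V) (with A acting by postcomposition) is simple. Then the restriction of V to 𝔤' is multiplicity-free — that is, dim_ℂ Hom_{𝔤'}(V', V) ≤ 1 for every simple 𝔤'-submodule V' of V — if and only if the algebra A is commutative. -/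
/-- The space `Hom_{L}(M, N)` of `L`-equivariant `R`-linear maps between two Lie modules,
as a submodule of the space of all `R`-linear maps `M → N`. -/
def lieEquivariantHoms (R L M N : Type*) [CommRing R] [LieRing L] [LieAlgebra R L]
    [AddCommGroup M] [Module R M] [LieRingModule L M]
    [AddCommGroup N] [Module R N] [LieRingModule L N] [LieModule R L N] :
    Submodule R (M →ₗ[R] N) where
  carrier := {φ | ∀ (y : L) (m : M), φ ⁅y, m⁆ = ⁅y, φ m⁆}
  add_mem' := by
    intro a b ha hb y m
    simp [ha y m, hb y m]
  zero_mem' := by intro y m; simp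
  smul_mem' := by
    intro c φ hφ y m
    simp [hφ y m]

open UniversalEnvelopingAlgebra in
/-- The centralizer of the image of a Lie subalgebra `𝔤' ⊆ 𝔤` in `U(𝔤)/Ann_{U(𝔤)}(V)`,
realized (via the canonical isomorphism of `U(𝔤)/Ann_{U(𝔤)}(V)` with the image of `U(𝔤)` in
`End_ℂ(V)`) as the subalgebra of `End_ℂ(V)` consisting of the operators coming from `U(𝔤)`
that commute with the image of `𝔤'`. -/
noncomputable def invariantsAlgebra {𝔤 : Type*} [LieRing 𝔤] [LieAlgebra ℂ 𝔤]
    (𝔤' : LieSubalgebra ℂ 𝔤) (V : Type*) [AddCommGroup V] [Module ℂ V]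
    [LieRingModule 𝔤 V] [LieModule ℂ 𝔤 V] : Subalgebra ℂ (Module.End ℂ V) :=
  (UniversalEnvelopingAlgebra.lift ℂ (LieModule.toEnd ℂ 𝔤 V)).range ⊓
    Subalgebra.centralizer ℂ
      {x : Module.End ℂ V | ∃ y : 𝔤',
        x = UniversalEnvelopingAlgebra.lift ℂ (LieModule.toEnd ℂ 𝔤 V)
              (UniversalEnvelopingAlgebra.ι ℂ (y : 𝔤))}

/-!
If every `Hom_{𝔤'}(W, V)` has dimension at most one, then each `a ∈ A` composed with the
inclusion of a simple `W` is a multiple of it, so `a` acts on `W` by a scalar; commutators in `A`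
therefore kill every simple submodule, hence all of `V`.

Conversely, if `A` is commutative, the simple `A`-module `Hom_{𝔤'}(V', V)` is isomorphic to
`A ⧸ 𝔪` for a maximal ideal `𝔪`. Since `U(𝔤)` has countable dimension, so has the field `A ⧸ 𝔪`,
and a field of dimension `< #ℂ` over `ℂ` is algebraic (the elements `(x - λ)⁻¹` of a
transcendental `x` are linearly independent), hence equal to `ℂ`.
-/

open Cardinal

universe u v w

theorem Algebra.IsAlgebraic.of_lift_rank_lt {k : Type u} {K : Type v} [Field k] [Field K]
    [Algebra k K] (h : lift.{u} (Module.rank k K) < lift.{v} #k) : Algebra.IsAlgebraic k K := by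
  refine ⟨fun x ↦ ?_⟩
  by_contra hx
  exact h.not_ge (Transcendental.linearIndependent_sub_inv hx).cardinal_lift_le_rank

open scoped IsMulCommutative in
theorem IsSimpleModule.rank_eq_one_of_isMulCommutative_of_lift_rank_lt (k : Type u) {A : Type v}
    {V : Type w} [Field k] [IsAlgClosed k] [Ring A] [IsMulCommutative A] [Algebra k A]
    [AddCommGroup V] [Module k V] [Module A V] [IsScalarTower k A V] [IsSimpleModule A V]
    (hA : lift.{u} (Module.rank k A) < lift.{v} #k) : Module.rank k V = 1 := by
  obtain ⟨m, hm, ⟨e⟩⟩ := isSimpleModule_iff_quot_maximal.mp ‹IsSimpleModule A V›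
  let := Ideal.Quotient.field m
  have hquot : lift.{u} (Module.rank k (A ⧸ m)) < lift.{v} #k :=
    (lift_le.mpr (LinearMap.rank_le_of_surjective (Ideal.Quotient.mkₐ k m).toLinearMap
      Ideal.Quotient.mk_surjective)).trans_lt hA
  have := Algebra.IsAlgebraic.of_lift_rank_lt hquot
  let f : k ≃ₐ[k] A ⧸ m := AlgEquiv.ofBijective (Algebra.ofId k (A ⧸ m))
    (IsAlgClosed.algebraMap_bijective_of_isIntegral (k := k))
  have hrank : Module.rank k (A ⧸ m) = 1 := by simpa using f.toLinearEquiv.lift_rank_eq.symm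
  simpa [hrank] using (e.restrictScalars k).lift_rank_eq

theorem UniversalEnvelopingAlgebra.rank_le_aleph0 {R L : Type*} [Field R] [LieRing L]
    [LieAlgebra R L] [FiniteDimensional R L] :
    Module.rank R (UniversalEnvelopingAlgebra R L) ≤ ℵ₀ := by
  have hT : Module.rank R (TensorAlgebra R L) ≤ ℵ₀ := by
    let e := (TensorAlgebra.equivFreeAlgebra (Module.finBasis R L)).toLinearEquiv
    rw [← lift_le_aleph0, e.lift_rank_eq, FreeAlgebra.rank_eq]
    simp [mk_le_aleph0]
  exact (LinearMap.rank_le_of_surjective (mkAlgHom R L).toLinearMap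
    (RingCon.mkₐ_surjective (α := R) _)).trans hT

theorem LieModuleHom.toLinearMap_mem_lieEquivariantHoms {R L M N : Type*} [CommRing R]
    [LieRing L] [LieAlgebra R L] [AddCommGroup M] [Module R M] [LieRingModule L M]
    [AddCommGroup N] [Module R N] [LieRingModule L N] [LieModule R L N] (f : M →ₗ⁅R,L⁆ N) :
    (f : M →ₗ[R] N) ∈ lieEquivariantHoms R L M N :=
  f.map_lie

section

variable {𝔤 : Type*} [LieRing 𝔤] [LieAlgebra ℂ 𝔤] {𝔤' : LieSubalgebra ℂ 𝔤}
  {V : Type*} [AddCommGroup V] [Module ℂ V] [LieRingModule 𝔤 V] [LieModule ℂ 𝔤 V]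

theorem apply_lie_of_mem_invariantsAlgebra {a : Module.End ℂ V}
    (ha : a ∈ invariantsAlgebra 𝔤' V) (y : 𝔤') (v : V) : a ⁅y, v⁆ = ⁅y, a v⁆ := by
  have h := (Subalgebra.mem_centralizer_iff ℂ).mp ha.2 _ ⟨y, rfl⟩
  rw [UniversalEnvelopingAlgebra.lift_ι_apply] at h
  simpa using (LinearMap.congr_fun h v).symm

def invariantsAlgebra.toLieModuleHom (a : invariantsAlgebra 𝔤' V) : V →ₗ⁅ℂ,𝔤'⁆ V :=
  { (a : Module.End ℂ V) with map_lie' := apply_lie_of_mem_invariantsAlgebra a.2 _ _ }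

theorem comp_mem_lieEquivariantHoms {M : Type*} [AddCommGroup M] [Module ℂ M]
    [LieRingModule 𝔤' M] {a : Module.End ℂ V} (ha : a ∈ invariantsAlgebra 𝔤' V)
    {φ : M →ₗ[ℂ] V} (hφ : φ ∈ lieEquivariantHoms ℂ 𝔤' M V) :
    a ∘ₗ φ ∈ lieEquivariantHoms ℂ 𝔤' M V := fun y m ↦ by
  simp only [LinearMap.comp_apply, hφ y m, apply_lie_of_mem_invariantsAlgebra ha]

theorem exists_smul_eq_of_rank_lieEquivariantHoms_le_one {W : LieSubmodule ℂ 𝔤' V}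
    (hW : Module.rank ℂ (lieEquivariantHoms ℂ 𝔤' W V) ≤ 1) {a : Module.End ℂ V}
    (ha : a ∈ invariantsAlgebra 𝔤' V) : ∃ c : ℂ, ∀ w ∈ W, a w = c • w := by
  have hincl := LieModuleHom.toLinearMap_mem_lieEquivariantHoms W.incl
  obtain ⟨φ, hφ⟩ := rank_le_one_iff.mp hW
  obtain ⟨r, hr⟩ := hφ ⟨_, hincl⟩
  obtain ⟨s, hs⟩ := hφ ⟨_, comp_mem_lieEquivariantHoms ha hincl⟩
  have hφr (w : V) (hw : w ∈ W) : r • (φ : W →ₗ[ℂ] V) ⟨w, hw⟩ = w := congr(($hr).1 ⟨w, hw⟩)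
  have hφs (w : V) (hw : w ∈ W) : s • (φ : W →ₗ[ℂ] V) ⟨w, hw⟩ = a w := congr(($hs).1 ⟨w, hw⟩)
  by_cases hr0 : r = 0
  · exact ⟨0, fun w hw ↦ by rw [← hφr w hw, hr0, zero_smul, map_zero, zero_smul]⟩
  refine ⟨s * r⁻¹, fun w hw ↦ ?_⟩
  conv_rhs => rw [← hφr w hw, smul_smul, mul_assoc, inv_mul_cancel₀ hr0, mul_one]
  exact (hφs w hw).symm

theorem eq_zero_of_forall_isAtom_apply_eq_zero
    (hss : sSup {W : LieSubmodule ℂ 𝔤' V | IsAtom W} = ⊤) {a : Module.End ℂ V} (ha : a ∈ invariantsAlgebra 𝔤' V)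
    (hatom : ∀ W : LieSubmodule ℂ 𝔤' V, IsAtom W → ∀ w ∈ W, a w = 0) : a = 0 := by
  have hker : ⊤ ≤ (invariantsAlgebra.toLieModuleHom ⟨a, ha⟩).ker :=
    hss ▸ sSup_le fun W hW w hw ↦ hatom W hW w hw
  ext v
  exact hker (LieSubmodule.mem_top v)

theorem rank_invariantsAlgebra_le_aleph0 [FiniteDimensional ℂ 𝔤] :
    Module.rank ℂ (invariantsAlgebra 𝔤' V) ≤ ℵ₀ := by
  let ρ := UniversalEnvelopingAlgebra.lift ℂ (LieModule.toEnd ℂ 𝔤 V)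
  have hle : Module.rank ℂ (invariantsAlgebra 𝔤' V) ≤
      Module.rank ℂ (LinearMap.range ρ.toLinearMap) :=
    Submodule.rank_mono (s := Subalgebra.toSubmodule (invariantsAlgebra 𝔤' V)) fun _ ha ↦ ha.1
  have hρ := (lift_rank_range_le ρ.toLinearMap).trans
    (lift_le.mpr UniversalEnvelopingAlgebra.rank_le_aleph0)
  rw [lift_aleph0, lift_le_aleph0] at hρ
  exact hle.trans hρ

variable (𝔤' V) in
/-- `Hom_{𝔤'}(M, V)` as a module over `invariantsAlgebra 𝔤' V`, acting by postcomposition. -/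
def equivariantHomsOverInvariants (M : Type*) [AddCommGroup M] [Module ℂ M]
    [LieRingModule 𝔤' M] : Submodule (invariantsAlgebra 𝔤' V) (M →ₗ[ℂ] V) :=
  { lieEquivariantHoms ℂ 𝔤' M V with
    smul_mem' := fun a _ hφ ↦ comp_mem_lieEquivariantHoms a.2 hφ }

theorem isSimpleModule_equivariantHomsOverInvariants {M : Type*} [AddCommGroup M] [Module ℂ M]
    [LieRingModule 𝔤' M] (hne : lieEquivariantHoms ℂ 𝔤' M V ≠ ⊥)
    (hsimple : ∀ U : Submodule ℂ (M →ₗ[ℂ] V), U ≤ lieEquivariantHoms ℂ 𝔤' M V →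
      (∀ a ∈ invariantsAlgebra 𝔤' V, ∀ φ ∈ U, a ∘ₗ φ ∈ U) →
      U = ⊥ ∨ U = lieEquivariantHoms ℂ 𝔤' M V) :
    IsSimpleModule (invariantsAlgebra 𝔤' V) (equivariantHomsOverInvariants 𝔤' V M) := by
  refine isSimpleModule_iff_isAtom.mpr (isAtom_iff_le_of_ge.mpr ⟨?_, fun N hN hle ↦ ?_⟩)
  · contrapose! hne
    exact congr(Submodule.restrictScalars ℂ $hne)
  · have hstable : ∀ a ∈ invariantsAlgebra 𝔤' V, ∀ φ ∈ N.restrictScalars ℂ,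
        a ∘ₗ φ ∈ N.restrictScalars ℂ := fun a ha φ hφ ↦ N.smul_mem ⟨a, ha⟩ hφ
    obtain hbot | htop := hsimple (N.restrictScalars ℂ) hle hstable
    · exact absurd (Submodule.restrictScalars_injective ℂ _ _ (hbot.trans
        (Submodule.restrictScalars_bot ℂ _ _).symm)) hN
    · exact (Submodule.restrictScalars_injective ℂ _ _ htop).ge

end

theorem multiplicity_free_iff_commutative_general
    {𝔤 : Type*} [LieRing 𝔤] [LieAlgebra ℂ 𝔤] [FiniteDimensional ℂ 𝔤]
    (𝔤' : LieSubalgebra ℂ 𝔤)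
    {V : Type*} [AddCommGroup V] [Module ℂ V] [LieRingModule 𝔤 V] [LieModule ℂ 𝔤 V]
    (hss : sSup {W : LieSubmodule ℂ 𝔤' V | IsAtom W} = ⊤)
    (hsimple : ∀ V' : LieSubmodule ℂ 𝔤' V, IsAtom V' →
      lieEquivariantHoms ℂ 𝔤' V' V ≠ ⊥ ∧
      ∀ U : Submodule ℂ (↥V' →ₗ[ℂ] V), U ≤ lieEquivariantHoms ℂ 𝔤' V' V →
        (∀ a ∈ invariantsAlgebra 𝔤' V, ∀ φ ∈ U, a ∘ₗ φ ∈ U) →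
        U = ⊥ ∨ U = lieEquivariantHoms ℂ 𝔤' V' V) :
    (∀ V' : LieSubmodule ℂ 𝔤' V, IsAtom V' →
        Module.rank ℂ (lieEquivariantHoms ℂ 𝔤' V' V) ≤ 1) ↔
      ∀ a b : invariantsAlgebra 𝔤' V, a * b = b * a := by
  constructor
  · intro hmf a b
    rw [← sub_eq_zero]
    refine Subtype.ext <| eq_zero_of_forall_isAtom_apply_eq_zero hss
      (sub_mem (mul_mem a.2 b.2) (mul_mem b.2 a.2)) fun W hW w hw ↦ ?_
    obtain ⟨c, hc⟩ := exists_smul_eq_of_rank_lieEquivariantHoms_le_one (hmf W hW) a.2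
    obtain ⟨d, hd⟩ := exists_smul_eq_of_rank_lieEquivariantHoms_le_one (hmf W hW) b.2
    simp [hc w hw, hd w hw, smul_smul, mul_comm c d]
  · intro hcomm V' hV'
    obtain ⟨hne, hsimp⟩ := hsimple V' hV'
    have : IsMulCommutative (invariantsAlgebra 𝔤' V) := ⟨⟨hcomm⟩⟩
    have := isSimpleModule_equivariantHomsOverInvariants hne hsimp
    have hA : lift.{0} (Module.rank ℂ (invariantsAlgebra 𝔤' V)) < lift #ℂ := by
      rw [mk_complex, lift_continuum]
      exact (lift_le_aleph0.mpr rank_invariantsAlgebra_le_aleph0).trans_lt aleph0_lt_continuum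
    exact (IsSimpleModule.rank_eq_one_of_isMulCommutative_of_lift_rank_lt ℂ
      (V := equivariantHomsOverInvariants 𝔤' V V') hA).le

/-- In the setting of Statement 9 (V a nonzero `U(𝔤)`-module, semisimple over the
subalgebra `𝔤'`, with every `Hom_{𝔤'}(V', V)` a simple module over the centralizer `A` of the
image of `𝔤'` in `U(𝔤)/Ann_{U(𝔤)}(V)`), the restriction of `V` to `𝔤'` is multiplicity-free
(`dim_ℂ Hom_{𝔤'}(V', V) ≤ 1` for every simple `𝔤'`-submodule `V'`) if and only if the algebra
`A` is commutative. -/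
theorem multiplicity_free_iff_commutative
    {𝔤 : Type*} [LieRing 𝔤] [LieAlgebra ℂ 𝔤] [FiniteDimensional ℂ 𝔤]
    (𝔤' : LieSubalgebra ℂ 𝔤)
    {V : Type*} [AddCommGroup V] [Module ℂ V] [LieRingModule 𝔤 V] [LieModule ℂ 𝔤 V]
    [Nontrivial V]
    (hss : sSup {W : LieSubmodule ℂ 𝔤' V | IsAtom W} = ⊤)
    (hsimple : ∀ V' : LieSubmodule ℂ 𝔤' V, IsAtom V' →
      lieEquivariantHoms ℂ 𝔤' V' V ≠ ⊥ ∧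
      ∀ U : Submodule ℂ (↥V' →ₗ[ℂ] V), U ≤ lieEquivariantHoms ℂ 𝔤' V' V →
        (∀ a ∈ invariantsAlgebra 𝔤' V, ∀ φ ∈ U, a ∘ₗ φ ∈ U) →
        U = ⊥ ∨ U = lieEquivariantHoms ℂ 𝔤' V' V) :
    (∀ V' : LieSubmodule ℂ 𝔤' V, IsAtom V' →
        Module.rank ℂ (lieEquivariantHoms ℂ 𝔤' V' V) ≤ 1) ↔
      ∀ a b : invariantsAlgebra 𝔤' V, a * b = b * a :=
  multiplicity_free_iff_commutative_general 𝔤' hss hsimple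
end

section
/- Let T : C ⥤ D be an additive exact functor between abelian categories such that for every object M of C the induced map T* : Subobject(M) → Subobject(T M), N ↦ T(N), is bijective. Then T is fully faithful, and T sends simple objects of C to simple objects of D (an object being simple when its subobject lattice has exactly the two elements ⊥ ≠ ⊤). -/
open CategoryTheory CategoryTheory.Limits

/-!
Because `T` preserves monomorphisms and `T* ⊤ = ⊤`, injectivity of `T*` implies that a
monomorphism `f` with `T f` invertible is itself invertible. If `T f = T g`, the equalizer of
`f, g` becomes invertible under `T`, so `f = g`. For fullness, a morphism `g : T X ⟶ T Y` has a
graph, a subobject of `T (X ⨯ Y)`; by surjectivity it is `T N` for some `N ≤ X ⨯ Y`, whose first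
projection `N ⟶ X` is inverted by `T`, hence (being mono, as `T` is faithful) invertible, and
`N` is the graph of a preimage of `g`. Simplicity transfers because `T*` is a bijection
preserving `⊥` and `⊤`.
-/

theorem IsSimpleOrder.of_bijective {α β : Type*} [LE α] [BoundedOrder α] [IsSimpleOrder α]
    [LE β] [BoundedOrder β] {f : α → β} (hf : Function.Bijective f) (hbot : f ⊥ = ⊥)
    (htop : f ⊤ = ⊤) : IsSimpleOrder β where
  exists_pair_ne := ⟨⊥, ⊤, by rw [← hbot, ← htop]; exact hf.injective.ne bot_ne_top⟩
  eq_bot_or_eq_top b := by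
    obtain ⟨a, rfl⟩ := hf.surjective b
    rcases IsSimpleOrder.eq_bot_or_eq_top a with rfl | rfl
    exacts [Or.inl hbot, Or.inr htop]

namespace CategoryTheory.Functor

variable {C D : Type*} [Category C] [Category D] (T : C ⥤ D) [T.PreservesMonomorphisms]

noncomputable def mapSubobject (M : C) (N : Subobject M) : Subobject (T.obj M) :=
  Subobject.mk (T.map N.arrow)

lemma mapSubobject_mk {X M : C} (f : X ⟶ M) [Mono f] :
    T.mapSubobject M (Subobject.mk f) = Subobject.mk (T.map f) :=
  Subobject.mk_eq_mk_of_comm _ _ (T.mapIso (Subobject.underlyingIso f)) <| by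
    simp [← T.map_comp]

lemma mapSubobject_top (M : C) : T.mapSubobject M ⊤ = ⊤ :=
  Subobject.mk_eq_top_of_isIso _

lemma mapSubobject_bot [HasZeroMorphisms C] [HasZeroObject C] [HasZeroMorphisms D]
    [HasZeroObject D] [T.PreservesZeroMorphisms] (M : C) : T.mapSubobject M ⊥ = ⊥ := by
  rw [mapSubobject, Subobject.mk_eq_bot_iff_zero, Subobject.bot_arrow, T.map_zero]

variable {T}

lemma isIso_of_mono_of_isIso_map (hinj : ∀ M, Function.Injective (T.mapSubobject M))
    {X Y : C} (f : X ⟶ Y) [Mono f] [IsIso (T.map f)] : IsIso f := by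
  refine (Subobject.isIso_iff_mk_eq_top f).2 (hinj Y ?_)
  rw [mapSubobject_mk, mapSubobject_top, Subobject.mk_eq_top_of_isIso]

lemma faithful_of_injective_mapSubobject [HasEqualizers C]
    [PreservesLimitsOfShape WalkingParallelPair T]
    (hinj : ∀ M, Function.Injective (T.mapSubobject M)) : T.Faithful where
  map_injective {X Y f g} h := by
    have : IsIso (T.map (equalizer.ι f g)) :=
      isIso_limit_cone_parallelPair_of_eq h (isLimitOfHasEqualizerOfPreservesLimit T f g)
    have : IsIso (equalizer.ι f g) := isIso_of_mono_of_isIso_map hinj _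
    exact eq_of_epi_equalizer

lemma exists_iso_hom_comp_eq_map_arrow (hsurj : ∀ M, Function.Surjective (T.mapSubobject M))
    {A : D} {M : C} (m : A ⟶ T.obj M) [Mono m] :
    ∃ (N : Subobject M) (e : T.obj N ≅ A), e.hom ≫ m = T.map N.arrow := by
  obtain ⟨N, hN⟩ := hsurj M (Subobject.mk m)
  exact ⟨N, Subobject.isoOfMkEqMk _ _ hN, Subobject.ofMkLEMk_comp hN.le⟩

lemma full_of_bijective_mapSubobject [HasBinaryProducts C]
    [PreservesLimitsOfShape (Discrete WalkingPair) T] [T.Faithful]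
    (hbij : ∀ M, Function.Bijective (T.mapSubobject M)) : T.Full where
  map_surjective {X Y} g := by
    let graph : T.obj X ⟶ T.obj (X ⨯ Y) :=
      prod.lift (𝟙 _) g ≫ CategoryTheory.inv (prodComparison T X Y)
    have graph_fst : graph ≫ T.map prod.fst = 𝟙 _ := by
      simp only [graph, Category.assoc, inv_prodComparison_map_fst, prod.lift_fst]
    have graph_snd : graph ≫ T.map prod.snd = g := by
      simp only [graph, Category.assoc, inv_prodComparison_map_snd, prod.lift_snd]
    have : Mono graph := mono_of_mono_fac graph_fst
    obtain ⟨N, e, he⟩ := exists_iso_hom_comp_eq_map_arrow (fun M => (hbij M).surjective) graph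
    have map_fst : T.map (N.arrow ≫ prod.fst) = e.hom := by
      rw [T.map_comp, ← he, Category.assoc, graph_fst, Category.comp_id]
    have : IsIso (T.map (N.arrow ≫ prod.fst)) := by rw [map_fst]; infer_instance
    have : Mono (N.arrow ≫ prod.fst) := T.mono_of_mono_map inferInstance
    have : IsIso (N.arrow ≫ prod.fst) :=
      isIso_of_mono_of_isIso_map (fun M => (hbij M).injective) _
    refine ⟨CategoryTheory.inv (N.arrow ≫ prod.fst) ≫ N.arrow ≫ prod.snd, ?_⟩
    rw [T.map_comp, T.map_inv, IsIso.inv_comp_eq, map_fst, T.map_comp, ← he, Category.assoc,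
      graph_snd]

end CategoryTheory.Functor

theorem fullyFaithful_of_bijective_on_subobjects_general
    {C D : Type*} [Category C] [Category D] [Abelian C] [Abelian D]
    (T : C ⥤ D) [PreservesFiniteLimits T]
    (hbij : ∀ M : C, Function.Bijective
      (fun N : Subobject M => Subobject.mk (T.map N.arrow))) :
    T.Full ∧ T.Faithful ∧
      ∀ M : C, IsSimpleOrder (Subobject M) → IsSimpleOrder (Subobject (T.obj M)) := by
  have hbij : ∀ M, Function.Bijective (T.mapSubobject M) := hbij
  have hfaithful := Functor.faithful_of_injective_mapSubobject fun M => (hbij M).injective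
  refine ⟨Functor.full_of_bijective_mapSubobject hbij, hfaithful, fun M _ => ?_⟩
  exact .of_bijective (hbij M) (T.mapSubobject_bot M) (T.mapSubobject_top M)

/-- Let `T : C ⥤ D` be an additive exact functor between abelian categories (exact
meaning that `T` preserves finite limits and finite colimits) such that for every object `M` the
induced map `Subobject M → Subobject (T M)`, `N ↦ T(N)`, is bijective.  Then `T` is fully
faithful and sends simple objects (objects whose subobject lattice has exactly the two elements
`⊥ ≠ ⊤`) to simple objects. -/
theorem fullyFaithful_of_bijective_on_subobjects
    {C D : Type*} [Category C] [Category D] [Abelian C] [Abelian D]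
    (T : C ⥤ D) [T.Additive] [PreservesFiniteLimits T] [PreservesFiniteColimits T]
    (hbij : ∀ M : C, Function.Bijective
      (fun N : Subobject M => Subobject.mk (T.map N.arrow))) :
    T.Full ∧ T.Faithful ∧
      ∀ M : C, IsSimpleOrder (Subobject M) → IsSimpleOrder (Subobject (T.obj M)) :=
  fullyFaithful_of_bijective_on_subobjects_general T hbij
end
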